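/- arXiv:2012.05554 — 8 statements merged into one kernel-verified Lean document; each statement's English description precedes it below -/
import Mathlib

section
/- For every rooted tree T and every vertex v of T, if a connected graph G is a spanning subgraph of the closure of T, then there exists a rooted tree T' of the same vertex set with depth at most the depth of T such that G is a subgraph of the closure of T' and for every vertex v of T', the subgraph of G induced by v together with all descendants of v in T' is connected. -/
/-!
Declare `w` to be below `v` in the new tree when `w` is a `T`-descendant of `v` reachable from `v`
inside the subgraph of `G` induced by the `T`-descendants of `v`. The new ancestor relation is
contained in that of `T`, so chains (hence the depth) can only shrink, and by construction the
descendants of `v` form a connected component of that induced subgraph. If `u ≤ v` in `T`, the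
induced subgraph at `v` lies inside the one at `u`; this makes the relation transitive and makes
the ancestors of a vertex a chain. Connectivity of `G` puts every vertex below the root.
-/

/-- A rooted tree on vertex set `V`, encoded by its ancestor order:
a partial order with a minimum element (the root) in which the set of
ancestors of any vertex is a chain. -/
structure TreeOrder (V : Type*) where
  le : V → V → Prop
  refl : ∀ v, le v v
  antisymm : ∀ u v, le u v → le v u → u = v
  trans : ∀ u v w, le u v → le v w → le u w
  root : V
  root_le : ∀ v, le root v
  downChain : ∀ u v w, le u w → le v w → le u v ∨ le v u

/-- The depth of the rooted tree (maximum number of vertices on a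
root--to--leaf path) is at most `d`: every chain has at most `d` vertices. -/
def TreeOrder.depthLE {V : Type*} (T : TreeOrder V) (d : ℕ) : Prop :=
  ∀ s : Finset V, (∀ u ∈ s, ∀ v ∈ s, T.le u v ∨ T.le v u) → s.card ≤ d

/-- `G` is a (spanning) subgraph of the closure of the rooted tree `T`:
every edge of `G` joins an ancestor-descendant pair of `T`. -/
def subClosure {V : Type*} (G : SimpleGraph V) (T : TreeOrder V) : Prop :=
  ∀ u v, G.Adj u v → T.le u v ∨ T.le v u

/-- The subgraph of `G` induced by the `T`-descendants of `v`, kept on all of `V` so that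
reachability in it is a relation on `V`. -/
abbrev SimpleGraph.aboveIn {V : Type*} (G : SimpleGraph V) (T : TreeOrder V) (v : V) :
    SimpleGraph V where
  Adj a b := G.Adj a b ∧ T.le v a ∧ T.le v b
  symm := ⟨fun _ _ h => ⟨h.1.symm, h.2.2, h.2.1⟩⟩
  loopless := ⟨fun _ h => G.irrefl h.1⟩

namespace SimpleGraph

variable {V : Type*} {G : SimpleGraph V} {T : TreeOrder V}

lemma aboveIn_le (v : V) : G.aboveIn T v ≤ G := fun _ _ h => h.1

lemma aboveIn_root : G.aboveIn T T.root = G := by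
  ext a b
  exact ⟨fun h => h.1, fun h => ⟨h, T.root_le a, T.root_le b⟩⟩

lemma aboveIn_anti {u v : V} (huv : T.le u v) : G.aboveIn T v ≤ G.aboveIn T u :=
  fun _ _ h => ⟨h.1, T.trans _ _ _ huv h.2.1, T.trans _ _ _ huv h.2.2⟩

lemma le_of_reachable_aboveIn {v w : V} (h : (G.aboveIn T v).Reachable v w) : T.le v w := by
  obtain ⟨p⟩ := h.symm
  cases p with
  | nil => exact T.refl v
  | cons hadj _ => exact hadj.2.1

lemma connected_induce_reachable_aboveIn (v : V) :
    (G.induce {w | (G.aboveIn T v).Reachable v w}).Connected := by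
  have hsupp : {w | (G.aboveIn T v).Reachable v w} =
      ((G.aboveIn T v).connectedComponentMk v).supp := by
    ext w
    simp only [Set.mem_ofPred_eq, ConnectedComponent.mem_supp_iff, ConnectedComponent.eq,
      reachable_comm]
  have hconn := (ConnectedComponent.maximal_connected_induce_supp
    ((G.aboveIn T v).connectedComponentMk v)).1
  rw [← hsupp] at hconn
  exact hconn.mono (comap_monotone _ (aboveIn_le v))

end SimpleGraph

lemma TreeOrder.depthLE_of_le {V : Type*} {T T' : TreeOrder V}
    (hle : ∀ u v, T'.le u v → T.le u v) {d : ℕ} (hd : T.depthLE d) : T'.depthLE d :=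
  fun s hs => hd s fun u hu v hv => (hs u hu v hv).imp (hle u v) (hle v u)

open SimpleGraph in
def TreeOrder.reachTree {V : Type*} (G : SimpleGraph V) (T : TreeOrder V) (hG : G.Connected) :
    TreeOrder V where
  le v w := (G.aboveIn T v).Reachable v w
  refl _ := Reachable.refl _
  antisymm _ _ h₁ h₂ :=
    T.antisymm _ _ (le_of_reachable_aboveIn h₁) (le_of_reachable_aboveIn h₂)
  trans _ _ _ h₁ h₂ := h₁.trans (h₂.mono (aboveIn_anti (le_of_reachable_aboveIn h₁)))
  root := T.root
  root_le v := aboveIn_root (T := T) ▸ hG.preconnected T.root v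
  downChain u v w hu hv := by
    rcases T.downChain u v w (le_of_reachable_aboveIn hu) (le_of_reachable_aboveIn hv) with h | h
    · exact .inl (hu.trans (hv.mono (aboveIn_anti h)).symm)
    · exact .inr (hv.trans (hu.mono (aboveIn_anti h)).symm)

lemma TreeOrder.subClosure_reachTree {V : Type*} {G : SimpleGraph V} {T : TreeOrder V}
    (hG : G.Connected) (hsub : subClosure G T) : subClosure G (T.reachTree G hG) := by
  intro a b hab
  rcases hsub a b hab with h | h
  · exact .inl (SimpleGraph.Adj.reachable ⟨hab, T.refl a, h⟩)
  · exact .inr (SimpleGraph.Adj.reachable ⟨hab.symm, T.refl b, h⟩)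

theorem stmt0 {V : Type*} (G : SimpleGraph V) (T : TreeOrder V)
    (hG : G.Connected) (hsub : subClosure G T) :
    ∃ T' : TreeOrder V,
      (∀ d : ℕ, T.depthLE d → T'.depthLE d) ∧
      subClosure G T' ∧
      ∀ v : V, (G.induce {w | T'.le v w}).Connected :=
  ⟨T.reachTree G hG,
    fun _ => TreeOrder.depthLE_of_le fun _ _ => SimpleGraph.le_of_reachable_aboveIn,
    TreeOrder.subClosure_reachTree hG hsub,
    SimpleGraph.connected_induce_reachable_aboveIn⟩
end

section
/- For every integer w ≥ 1, every graph with pathwidth at most w has a vertex 2-colouring such that every monochromatic path has at most (w+3)^w vertices. -/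
/-!
Represent a path decomposition of width `w` by intervals `[l v, r v]` of bag indices. Choose
separator points `m₀ < m₁ < ⋯`, each the first point after all intervals through the previous
one; then every nonempty bag contains a vertex whose interval contains a separator point. Colour
the vertices on `mₖ` by the parity of `k`; deleting them lowers the width by one, and the other
vertices are coloured by induction. A monochromatic path cannot meet two separator points
`mⱼ < mₖ`: being connected, it would have to cross `mⱼ₊₁`, whose vertices have the other colour.
So it meets at most `w + 1` separator vertices, between which lie runs of at most `g (w - 1)`
other vertices (`g = monoPathBound`), giving `g w = (w + 1) (g (w - 1) + 1) + g (w - 1)`, which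
is at most `(w + 3) ^ w`. For `w = 1` a Helly argument shows that only the two ends of the path
can avoid the separator, which gives `g 1 = 4`.
-/

/-- `(B 0, …, B (n-1))` is a path-decomposition of `G`: each vertex lies in a
nonempty interval of bags and each edge lies in a common bag. -/
def PathDecomp {V : Type*} (G : SimpleGraph V) (n : ℕ) (B : Fin n → Finset V) : Prop :=
  (∀ v : V, ∃ i, v ∈ B i) ∧
  (∀ v : V, ∀ i j k : Fin n, i ≤ j → j ≤ k → v ∈ B i → v ∈ B k → v ∈ B j) ∧
  (∀ u v : V, G.Adj u v → ∃ i, u ∈ B i ∧ v ∈ B i)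

/-- `G` has pathwidth at most `w`. -/
def pathwidthLE {V : Type*} (G : SimpleGraph V) (w : ℕ) : Prop :=
  ∃ (n : ℕ) (B : Fin n → Finset V), PathDecomp G n B ∧ ∀ i, (B i).card ≤ w + 1

def monoPathBound : ℕ → ℕ
  | 0 => 1
  | 1 => 4
  | n + 2 => (n + 3) * (monoPathBound (n + 1) + 1) + monoPathBound (n + 1)

theorem monoPathBound_le_pow : ∀ w, monoPathBound w ≤ (w + 3) ^ w
  | 0 => le_rfl
  | 1 => le_rfl
  | n + 2 => by
    have ih := monoPathBound_le_pow (n + 1)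
    calc monoPathBound (n + 2) = (n + 4) * monoPathBound (n + 1) + (n + 3) := by
          simp only [monoPathBound]; ring
      _ ≤ (n + 4) * (n + 4) ^ (n + 1) + (n + 4) ^ (n + 1) := by
          gcongr
          exact le_trans (by omega) (Nat.le_self_pow (by omega) _)
      _ = (n + 4) ^ (n + 1) * (n + 5) := by ring
      _ ≤ (n + 5) ^ (n + 1) * (n + 5) := by gcongr; omega
      _ = (n + 2 + 3) ^ (n + 2) := by ring

namespace List

variable {α : Type*}

theorem length_le_countP_mul_add (p : α → Bool) {g : ℕ} {L : List α}
    (h : ∀ L', L' <:+: L → (∀ x ∈ L', p x = false) → L'.length ≤ g) :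
    L.length ≤ L.countP p * (g + 1) + g := by
  suffices key : L.length ≤ L.countP p * (g + 1) + (L.takeWhile (! p ·)).length from
    key.trans (Nat.add_le_add_left (h _ (takeWhile_prefix _).isInfix
      fun x hx => by simpa using mem_takeWhile_imp hx) _)
  induction L with
  | nil => simp
  | cons a t ih =>
    have ih := ih fun L' hL' => h L' (hL'.trans (suffix_cons a t).isInfix)
    cases hpa : p a
    · rw [countP_cons_of_neg (by simp [hpa]), takeWhile_cons_of_pos (by simp [hpa])]
      simp only [length_cons]
      omega
    · have hrun := h (t.takeWhile (! p ·))
        ((takeWhile_prefix _).isInfix.trans (suffix_cons a t).isInfix)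
        fun x hx => by simpa using mem_takeWhile_imp hx
      rw [countP_cons_of_pos hpa, takeWhile_cons_of_neg (by simp [hpa])]
      simp only [length_cons, length_nil]
      nlinarith

theorem length_le_countP_add_two {R : α → α → Prop} (p : α → Bool) {L : List α}
    (hc : L.IsChain R) (hn : L.Nodup)
    (h : ∀ x ∈ L, ∀ y ∈ L, ∀ z ∈ L, R x y → R y z → x ≠ z → p y) :
    L.length ≤ L.countP p + 2 := by
  suffices key : ∀ {L : List α}, L.IsChain R → L.Nodup →
      (∀ x ∈ L, ∀ y ∈ L, ∀ z ∈ L, R x y → R y z → x ≠ z → p y) →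
      L.tail.length ≤ L.tail.countP p + 1 by
    have := key hc hn h
    cases L with
    | nil => simp
    | cons a t => simp only [tail_cons, length_cons, countP_cons] at this ⊢; omega
  intro L hc hn h
  induction L with
  | nil => simp
  | cons a t ih =>
    match t, hc, hn, ih with
    | [], _, _, _ => simp
    | [_], _, _, _ => simp
    | b :: c :: t, hc, hn, ih =>
      rw [isChain_cons_cons] at hc
      rw [isChain_cons_cons] at hc
      have hpb := h a (by simp) b (by simp) c (by simp) hc.1 hc.2.1 (by simp at hn; tauto)
      have := ih (isChain_cons_cons.2 hc.2) hn.of_cons fun x hx y hy z hz =>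
        h x (mem_cons_of_mem _ hx) y (mem_cons_of_mem _ hy) z (mem_cons_of_mem _ hz)
      simp only [tail_cons, length_cons, countP_cons, hpb, if_true] at this ⊢
      omega

theorem Nodup.countP_le_card [DecidableEq α] {L : List α} (hL : L.Nodup) (p : α → Bool)
    {s : Finset α} (h : ∀ x ∈ L, p x → x ∈ s) : L.countP p ≤ s.card := by
  rw [countP_eq_length_filter, ← toFinset_card_of_nodup (hL.filter p)]
  exact Finset.card_le_card fun x hx => by
    simp only [mem_toFinset, mem_filter] at hx
    exact h x hx.1 hx.2

end List

namespace SimpleGraph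

variable {V : Type*}

/-- `v ↦ [l v, r v]` is an interval model of a supergraph of `G`. A path decomposition of
width `w` is the same as such a model in which every point lies in at most `w + 1` intervals. -/
structure IsIntervalModel (G : SimpleGraph V) (l r : V → ℕ) : Prop where
  le : ∀ v, l v ≤ r v
  adj : ∀ ⦃u v⦄, G.Adj u v → l u ≤ r v ∧ l v ≤ r u

def intervalBag (l r : V → ℕ) (A : Finset V) (i : ℕ) : Finset V :=
  A.filter fun v => l v ≤ i ∧ i ≤ r v

@[simp]
theorem mem_intervalBag {l r : V → ℕ} {A : Finset V} {i : ℕ} {v : V} :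
    v ∈ intervalBag l r A i ↔ v ∈ A ∧ l v ≤ i ∧ i ≤ r v :=
  Finset.mem_filter

theorem intervalBag_mono {l r : V → ℕ} {A A' : Finset V} (h : A ⊆ A') (i : ℕ) :
    intervalBag l r A i ⊆ intervalBag l r A' i :=
  Finset.filter_subset_filter _ h

namespace IsIntervalModel

variable {G : SimpleGraph V} {l r : V → ℕ} {A : Finset V}

theorem lt_or_gt_of_isChain (hG : G.IsIntervalModel l r) (M : ℕ) :
    ∀ {L : List V}, L.IsChain G.Adj → (∀ x ∈ L, ¬(l x ≤ M ∧ M ≤ r x)) →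
      (∀ x ∈ L, r x < M) ∨ (∀ x ∈ L, M < l x)
  | [], _, _ => by simp
  | [a], _, h => by
    have := h a (by simp)
    simp only [List.mem_singleton, forall_eq]
    omega
  | a :: b :: t, hc, h => by
    rw [List.isChain_cons_cons] at hc
    have hab := hG.adj hc.1
    have ha := h a (by simp)
    rcases hG.lt_or_gt_of_isChain M hc.2 fun x hx => h x (List.mem_cons_of_mem _ hx)
      with hleft | hright
    · have := hleft b (by simp)
      exact .inl <| List.forall_mem_cons.2 ⟨by omega, hleft⟩
    · have := hright b (by simp)
      exact .inr <| List.forall_mem_cons.2 ⟨by omega, hright⟩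

theorem not_adj_of_card_le_one (hG : G.IsIntervalModel l r)
    (hA : ∀ i, (intervalBag l r A i).card ≤ 1) {u v : V} (hu : u ∈ A) (hv : v ∈ A) :
    ¬G.Adj u v := fun huv => by
  have := hG.adj huv
  have := hG.le u
  have := hG.le v
  exact G.ne_of_adj huv (Finset.card_le_one.1 (hA (max (l u) (l v)))
    u (mem_intervalBag.2 ⟨hu, by omega, by omega⟩) v (mem_intervalBag.2 ⟨hv, by omega, by omega⟩))

end IsIntervalModel

section Separators

variable (l r : V → ℕ) (A : Finset V)

/-- Each separator point is the first point after all intervals through the previous one. -/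
def sepPoint : ℕ → ℕ
  | 0 => 0
  | k + 1 => max (sepPoint k) ((intervalBag l r A (sepPoint k)).sup r) + 1

open Classical in
noncomputable def sepSet : Finset V :=
  A.filter fun v => ∃ k, l v ≤ sepPoint l r A k ∧ sepPoint l r A k ≤ r v

noncomputable def sepIndex (v : V) : ℕ :=
  sInf {k | l v ≤ sepPoint l r A k ∧ sepPoint l r A k ≤ r v}

variable {l r A}

theorem sepPoint_lt_succ (k : ℕ) : sepPoint l r A k < sepPoint l r A (k + 1) :=
  Nat.lt_succ_of_le (le_max_left _ _)

theorem sepPoint_strictMono : StrictMono (sepPoint l r A) :=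
  strictMono_nat_of_lt_succ sepPoint_lt_succ

theorem lt_sepPoint_succ_of_mem {k : ℕ} {v : V} (hv : v ∈ intervalBag l r A (sepPoint l r A k)) :
    r v < sepPoint l r A (k + 1) :=
  Nat.lt_succ_of_le ((Finset.le_sup hv).trans (le_max_right _ _))

theorem exists_mem_intervalBag_sepPoint {k i : ℕ} (hk : sepPoint l r A k < i)
    (hk' : i < sepPoint l r A (k + 1)) :
    ∃ v ∈ intervalBag l r A (sepPoint l r A k), v ∈ intervalBag l r A i := by
  have hi : i ≤ (intervalBag l r A (sepPoint l r A k)).sup r := by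
    simp only [sepPoint] at hk'
    omega
  obtain ⟨v, hv, hiv⟩ := (Finset.le_sup_iff (Nat.bot_eq_zero ▸ by omega)).1 hi
  have hv' := mem_intervalBag.1 hv
  exact ⟨v, hv, mem_intervalBag.2 ⟨hv'.1, by omega, hiv⟩⟩

theorem exists_sepPoint_le_lt (i : ℕ) :
    ∃ k, sepPoint l r A k ≤ i ∧ i < sepPoint l r A (k + 1) := by
  induction i with
  | zero => exact ⟨0, le_rfl, sepPoint_lt_succ 0⟩
  | succ i ih =>
    obtain ⟨k, hk, hk'⟩ := ih
    rcases (Nat.add_one_le_of_lt hk').lt_or_eq with h | h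
    · exact ⟨k, by omega, h⟩
    · exact ⟨k + 1, h.ge, h ▸ sepPoint_lt_succ (k + 1)⟩

theorem eq_of_sepPoint_mem {v : V} (hv : v ∈ A) {k k' : ℕ}
    (hk : l v ≤ sepPoint l r A k ∧ sepPoint l r A k ≤ r v)
    (hk' : l v ≤ sepPoint l r A k' ∧ sepPoint l r A k' ≤ r v) : k = k' := by
  wlog hlt : k < k' generalizing k k'
  · rcases (not_lt.1 hlt).lt_or_eq with h | h
    · exact (this hk' hk h).symm
    · exact h.symm
  have := lt_sepPoint_succ_of_mem (mem_intervalBag.2 ⟨hv, hk⟩)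
  have : sepPoint l r A (k + 1) ≤ sepPoint l r A k' := sepPoint_strictMono.monotone hlt
  omega

theorem sepIndex_eq {v : V} (hv : v ∈ A) {k : ℕ}
    (hk : l v ≤ sepPoint l r A k ∧ sepPoint l r A k ≤ r v) : sepIndex l r A v = k := by
  have : {k | l v ≤ sepPoint l r A k ∧ sepPoint l r A k ≤ r v} = {k} :=
    Set.eq_singleton_iff_unique_mem.2 ⟨hk, fun k' hk' => eq_of_sepPoint_mem hv hk' hk⟩
  rw [sepIndex, this, csInf_singleton]

theorem mem_sepSet {v : V} :
    v ∈ sepSet l r A ↔ v ∈ A ∧ ∃ k, l v ≤ sepPoint l r A k ∧ sepPoint l r A k ≤ r v := by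
  classical
  simp [sepSet]

theorem sepPoint_sepIndex_mem {v : V} (hv : v ∈ sepSet l r A) :
    v ∈ intervalBag l r A (sepPoint l r A (sepIndex l r A v)) := by
  obtain ⟨hvA, k, hk⟩ := mem_sepSet.1 hv
  rw [sepIndex_eq hvA hk]
  exact mem_intervalBag.2 ⟨hvA, hk⟩

theorem exists_mem_sepSet_of_nonempty {i : ℕ} (hne : (intervalBag l r A i).Nonempty) :
    ∃ v ∈ intervalBag l r A i, v ∈ sepSet l r A := by
  obtain ⟨k, hk, hk'⟩ := exists_sepPoint_le_lt (l := l) (r := r) (A := A) i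
  rcases hk.lt_or_eq with h | h
  · obtain ⟨v, hvk, hvi⟩ := exists_mem_intervalBag_sepPoint h hk'
    have hvk := mem_intervalBag.1 hvk
    exact ⟨v, hvi, mem_sepSet.2 ⟨hvk.1, k, hvk.2⟩⟩
  · obtain ⟨v, hv⟩ := hne
    have hv' := mem_intervalBag.1 hv
    exact ⟨v, hv, mem_sepSet.2 ⟨hv'.1, k, h ▸ hv'.2⟩⟩

theorem card_intervalBag_sdiff_sepSet_le [DecidableEq V] {w : ℕ}
    (hA : ∀ i, (intervalBag l r A i).card ≤ w + 1) (i : ℕ) :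
    (intervalBag l r (A \ sepSet l r A) i).card ≤ w := by
  obtain hempty | ⟨u, hu⟩ := (intervalBag l r (A \ sepSet l r A) i).eq_empty_or_nonempty
  · simp [hempty]
  obtain ⟨v, hv, hvS⟩ := exists_mem_sepSet_of_nonempty
    ⟨u, intervalBag_mono Finset.sdiff_subset i hu⟩
  calc (intervalBag l r (A \ sepSet l r A) i).card
      ≤ ((intervalBag l r A i).erase v).card := Finset.card_le_card fun x hx => by
        have hx' := mem_intervalBag.1 hx
        refine Finset.mem_erase.2 ⟨?_, intervalBag_mono Finset.sdiff_subset i hx⟩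
        rintro rfl
        exact (Finset.mem_sdiff.1 hx'.1).2 hvS
    _ = (intervalBag l r A i).card - 1 := Finset.card_erase_of_mem hv
    _ ≤ w := by have := hA i; omega

end Separators

variable {G : SimpleGraph V} {l r : V → ℕ} {A : Finset V}

def MonoPathsLE (G : SimpleGraph V) (A : Finset V) (f : V → Fin 2) (n : ℕ) : Prop :=
  ∀ L : List V, L.IsChain G.Adj → L.Nodup → (∀ x ∈ L, x ∈ A) →
    (∀ x ∈ L, ∀ y ∈ L, f x = f y) → L.length ≤ n

variable [DecidableEq V]

variable (l r A) in
noncomputable def sepColouring (f : V → Fin 2) (v : V) : Fin 2 :=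
  if v ∈ sepSet l r A then Fin.ofNat 2 (sepIndex l r A v) else f v

namespace IsIntervalModel

theorem exists_sepPoint_of_mono (hG : G.IsIntervalModel l r) {f : V → Fin 2} {L : List V}
    (hc : L.IsChain G.Adj) (hLA : ∀ x ∈ L, x ∈ A)
    (hm : ∀ x ∈ L, ∀ y ∈ L, sepColouring l r A f x = sepColouring l r A f y) :
    ∃ k, ∀ x ∈ L, x ∈ sepSet l r A → x ∈ intervalBag l r A (sepPoint l r A k) := by
  have parity : ∀ x ∈ L, ∀ y ∈ L, x ∈ sepSet l r A → y ∈ sepSet l r A →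
      sepIndex l r A x % 2 = sepIndex l r A y % 2 := by
    intro x hx y hy hxS hyS
    simpa [sepColouring, hxS, hyS, Fin.val_ofNat] using congrArg Fin.val (hm x hx y hy)
  have index_le : ∀ x ∈ L, ∀ y ∈ L, x ∈ sepSet l r A → y ∈ sepSet l r A →
      sepIndex l r A x ≤ sepIndex l r A y := by
    intro x hx y hy hxS hyS
    by_contra! hlt
    have hx' := mem_intervalBag.1 (sepPoint_sepIndex_mem hxS)
    have hy' := mem_intervalBag.1 (sepPoint_sepIndex_mem hyS)
    set k := sepIndex l r A y
    have hgap : k + 1 < sepIndex l r A x := by have := parity x hx y hy hxS hyS; omega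
    -- The path cannot cross separator point `k + 1`: its vertices have the other colour.
    have hcross : ∀ z ∈ L, ¬(l z ≤ sepPoint l r A (k + 1) ∧ sepPoint l r A (k + 1) ≤ r z) := by
      intro z hz hzk
      have := parity z hz y hy (mem_sepSet.2 ⟨hLA z hz, k + 1, hzk⟩) hyS
      rw [sepIndex_eq (hLA z hz) hzk] at this
      omega
    have : sepPoint l r A k < sepPoint l r A (k + 1) := sepPoint_lt_succ k
    have : sepPoint l r A (k + 1) < sepPoint l r A (sepIndex l r A x) := sepPoint_strictMono hgap
    rcases hG.lt_or_gt_of_isChain _ hc hcross with h | h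
    · have := h x hx; omega
    · have := h y hy; omega
  by_cases hS : ∃ x ∈ L, x ∈ sepSet l r A
  · obtain ⟨x₀, hx₀, hx₀S⟩ := hS
    refine ⟨sepIndex l r A x₀, fun x hx hxS => ?_⟩
    rw [← le_antisymm (index_le x hx x₀ hx₀ hxS hx₀S) (index_le x₀ hx₀ x hx hx₀S hxS)]
    exact sepPoint_sepIndex_mem hxS
  · push Not at hS
    exact ⟨0, fun x hx hxS => absurd hxS (hS x hx)⟩

theorem countP_sepSet_le (hG : G.IsIntervalModel l r) {w : ℕ}
    (hA : ∀ i, (intervalBag l r A i).card ≤ w + 1) {f : V → Fin 2} {L : List V}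
    (hc : L.IsChain G.Adj) (hn : L.Nodup) (hLA : ∀ x ∈ L, x ∈ A)
    (hm : ∀ x ∈ L, ∀ y ∈ L, sepColouring l r A f x = sepColouring l r A f y) :
    L.countP (· ∈ sepSet l r A) ≤ w + 1 := by
  obtain ⟨k, hk⟩ := hG.exists_sepPoint_of_mono hc hLA hm
  exact (hn.countP_le_card _ fun x hx hxS => hk x hx (by simpa using hxS)).trans (hA _)

theorem length_le_countP_sepSet_add_two (hG : G.IsIntervalModel l r)
    (hA : ∀ i, (intervalBag l r A i).card ≤ 2) {f : V → Fin 2} {L : List V}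
    (hc : L.IsChain G.Adj) (hn : L.Nodup) (hLA : ∀ x ∈ L, x ∈ A)
    (hm : ∀ x ∈ L, ∀ y ∈ L, sepColouring l r A f x = sepColouring l r A f y) :
    L.length ≤ L.countP (· ∈ sepSet l r A) + 2 := by
  obtain ⟨k, hk⟩ := hG.exists_sepPoint_of_mono hc hLA hm
  refine List.length_le_countP_add_two _ hc hn fun x hx y hy z hz hxy hyz hxz => ?_
  by_contra hyS
  simp only [decide_eq_true_eq] at hyS
  have mem_sepSet_of_adj : ∀ u ∈ L, G.Adj y u → u ∈ sepSet l r A := fun u hu hyu => by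
    by_contra huS
    exact hG.not_adj_of_card_le_one (card_intervalBag_sdiff_sepSet_le hA)
      (Finset.mem_sdiff.2 ⟨hLA y hy, hyS⟩) (Finset.mem_sdiff.2 ⟨hLA u hu, huS⟩) hyu
  have hx' := mem_intervalBag.1 (hk x hx (mem_sepSet_of_adj x hx hxy.symm))
  have hz' := mem_intervalBag.1 (hk z hz (mem_sepSet_of_adj z hz hyz))
  have := hG.adj hxy
  have := hG.adj hyz
  have := hG.le y
  -- Helly: the three pairwise intersecting intervals share a point.
  refine (hA (max (l x) (max (l y) (l z)))).not_gt (Finset.two_lt_card.2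
    ⟨x, ?_, y, ?_, z, ?_, G.ne_of_adj hxy, hxz, G.ne_of_adj hyz⟩) <;>
  exact mem_intervalBag.2 ⟨hLA _ ‹_›, by omega, by omega⟩

end IsIntervalModel

theorem length_le_of_monoPathsLE {f : V → Fin 2} {n : ℕ}
    (hf : G.MonoPathsLE (A \ sepSet l r A) f n) {L : List V}
    (hc : L.IsChain G.Adj) (hn : L.Nodup) (hLA : ∀ x ∈ L, x ∈ A)
    (hm : ∀ x ∈ L, ∀ y ∈ L, sepColouring l r A f x = sepColouring l r A f y) :
    L.length ≤ L.countP (· ∈ sepSet l r A) * (n + 1) + n :=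
  List.length_le_countP_mul_add _ fun L' hL' hfree => by
    have hS : ∀ x ∈ L', x ∉ sepSet l r A := fun x hx => by simpa using hfree x hx
    refine hf L' (hc.infix hL') (hn.sublist hL'.sublist)
      (fun x hx => Finset.mem_sdiff.2 ⟨hLA x (hL'.subset hx), hS x hx⟩) fun x hx y hy => ?_
    simpa [sepColouring, hS x hx, hS y hy] using hm x (hL'.subset hx) y (hL'.subset hy)

theorem IsIntervalModel.exists_monoPathsLE (hG : G.IsIntervalModel l r) :
    ∀ (w : ℕ) (A : Finset V), (∀ i, (intervalBag l r A i).card ≤ w + 1) →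
      ∃ f, G.MonoPathsLE A f (monoPathBound w)
  | 0, A, hA => ⟨0, fun L hc _ hLA _ =>
    match L, hc with
    | [], _ => by simp [monoPathBound]
    | [_], _ => by simp [monoPathBound]
    | a :: b :: _, hc => absurd (List.isChain_cons_cons.1 hc).1
      (hG.not_adj_of_card_le_one hA (hLA a (by simp)) (hLA b (by simp)))⟩
  | w + 1, A, hA => by
    obtain ⟨f, hf⟩ :=
      hG.exists_monoPathsLE w (A \ sepSet l r A) (card_intervalBag_sdiff_sepSet_le hA)
    refine ⟨sepColouring l r A f, fun L hc hn hLA hm => ?_⟩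
    have hcount := hG.countP_sepSet_le hA hc hn hLA hm
    cases w with
    | zero =>
      have := hG.length_le_countP_sepSet_add_two hA hc hn hLA hm
      simp only [monoPathBound]
      omega
    | succ w =>
      have := length_le_of_monoPathsLE hf hc hn hLA hm
      have : L.countP (· ∈ sepSet l r A) * (monoPathBound (w + 1) + 1) ≤
          (w + 3) * (monoPathBound (w + 1) + 1) := Nat.mul_le_mul_right _ hcount
      simp only [monoPathBound]
      omega

end SimpleGraph

open SimpleGraph in
theorem PathDecomp.exists_isIntervalModel {V : Type*} {G : SimpleGraph V} {n : ℕ}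
    {B : Fin n → Finset V} (hB : PathDecomp G n B) :
    ∃ l r : V → ℕ, G.IsIntervalModel l r ∧
      ∀ v (i : ℕ), l v ≤ i → i ≤ r v → ∃ hi : i < n, v ∈ B ⟨i, hi⟩ := by
  classical
  obtain ⟨hcover, hconvex, hedge⟩ := hB
  have hne (v : V) : (Finset.univ.filter fun i => v ∈ B i).Nonempty := by
    obtain ⟨i, hi⟩ := hcover v
    exact ⟨i, by simpa using hi⟩
  have hfirst (v : V) : v ∈ B ((Finset.univ.filter fun i => v ∈ B i).min' (hne v)) := by
    simpa using Finset.min'_mem _ (hne v)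
  have hlast (v : V) : v ∈ B ((Finset.univ.filter fun i => v ∈ B i).max' (hne v)) := by
    simpa using Finset.max'_mem _ (hne v)
  have hbounds (v : V) (i : Fin n) (hi : v ∈ B i) :
      (Finset.univ.filter fun i => v ∈ B i).min' (hne v) ≤ i ∧
        i ≤ (Finset.univ.filter fun i => v ∈ B i).max' (hne v) :=
    have hi : i ∈ Finset.univ.filter fun i => v ∈ B i := by simpa using hi
    ⟨Finset.min'_le _ _ hi, Finset.le_max' _ _ hi⟩
  refine ⟨fun v => (Finset.univ.filter fun i => v ∈ B i).min' (hne v),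
    fun v => (Finset.univ.filter fun i => v ∈ B i).max' (hne v),
    ⟨fun v => Finset.min'_le_max' _ (hne v), fun u v huv => ?_⟩,
    fun v i hl hr => ?_⟩
  · obtain ⟨i, hu, hv⟩ := hedge u v huv
    have hu := hbounds u i hu
    have hv := hbounds v i hv
    simp only [Fin.le_def] at hu hv
    omega
  · have hi : i < n := hr.trans_lt (Fin.is_lt _)
    exact ⟨hi, hconvex v _ ⟨i, hi⟩ _ hl hr (hfirst v) (hlast v)⟩

open SimpleGraph in
theorem pathwidthLE.exists_isIntervalModel {V : Type*} [DecidableEq V] {G : SimpleGraph V}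
    {w : ℕ} (h : pathwidthLE G w) :
    ∃ (l r : V → ℕ) (A : Finset V), G.IsIntervalModel l r ∧ (∀ v, v ∈ A) ∧
      ∀ i, (intervalBag l r A i).card ≤ w + 1 := by
  obtain ⟨n, B, hB, hcard⟩ := h
  obtain ⟨l, r, hG, hmem⟩ := hB.exists_isIntervalModel
  refine ⟨l, r, Finset.univ.biUnion B, hG, fun v => ?_, fun i => ?_⟩
  · obtain ⟨i, hi⟩ := hB.1 v
    exact Finset.mem_biUnion.2 ⟨i, Finset.mem_univ _, hi⟩
  by_cases hi : i < n
  · refine (Finset.card_le_card fun v hv => ?_).trans (hcard ⟨i, hi⟩)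
    obtain ⟨-, hl, hr⟩ := mem_intervalBag.1 hv
    exact (hmem v i hl hr).2
  · have hempty : intervalBag l r (Finset.univ.biUnion B) i = ∅ :=
      Finset.eq_empty_of_forall_notMem fun v hv => by
        obtain ⟨-, hl, hr⟩ := mem_intervalBag.1 hv
        exact hi (hmem v i hl hr).1
    simp [hempty]

theorem stmt2_general {V : Type*} (G : SimpleGraph V) (w : ℕ)
    (hpw : pathwidthLE G w) :
    ∃ f : V → Fin 2,
      ∀ (u v : V) (p : G.Walk u v), p.IsPath →
        (∀ x ∈ p.support, f x = f u) → p.support.length ≤ (w + 3) ^ w := by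
  classical
  obtain ⟨l, r, A, hG, hA, hwidth⟩ := hpw.exists_isIntervalModel
  obtain ⟨f, hf⟩ := hG.exists_monoPathsLE w A hwidth
  refine ⟨f, fun u v p hp hmono => ?_⟩
  calc p.support.length
      ≤ monoPathBound w := hf _ p.isChain_adj_support hp.support_nodup (fun x _ => hA x)
        fun x hx y hy => (hmono x hx).trans (hmono y hy).symm
    _ ≤ (w + 3) ^ w := monoPathBound_le_pow w

theorem stmt2 {V : Type*} (G : SimpleGraph V) (w : ℕ) (hw : 1 ≤ w)
    (hpw : pathwidthLE G w) :
    ∃ f : V → Fin 2,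
      ∀ (u v : V) (p : G.Walk u v), p.IsPath →
        (∀ x ∈ p.support, f x = f u) → p.support.length ≤ (w + 3) ^ w :=
  stmt2_general G w hpw
end

section
/- For every integer w ≥ 1, every graph with pathwidth at most w has a vertex 2-colouring such that each monochromatic connected component has treedepth at most (w+3)^w. -/
/-- A rooted forest on vertex set `V`, encoded by its ancestor order:
a partial order in which the set of ancestors of any vertex is a chain. -/
structure ForestOrder (V : Type*) where
  le : V → V → Prop
  refl : ∀ v, le v v
  antisymm : ∀ u v, le u v → le v u → u = v
  trans : ∀ u v w, le u v → le v w → le u w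
  downChain : ∀ u v w, le u w → le v w → le u v ∨ le v u

/-- `G` has treedepth at most `d`: `G` is a subgraph of the closure of a rooted
forest on `V(G)` of depth at most `d` (equivalently, every connected component
has a rooted tree of depth at most `d` whose closure contains it). -/
def treedepthLE {V : Type*} (G : SimpleGraph V) (d : ℕ) : Prop :=
  ∃ F : ForestOrder V,
    (∀ s : Finset V, (∀ u ∈ s, ∀ v ∈ s, F.le u v ∨ F.le v u) → s.card ≤ d) ∧
    ∀ u v, G.Adj u v → F.le u v ∨ F.le v u

/-!
A path-decomposition of width `w` is an interval model: every vertex `v` gets an interval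
`[l v, r v]`, adjacent vertices have intersecting intervals, and at most `w + 1` intervals pass
through any point. Choose breakpoints `0 = brk 0 < brk 1 < ⋯` greedily, `brk (i + 1)` being the
furthest right end of an interval through `brk i + 1`. Then every point strictly between two
consecutive breakpoints lies on an interval that contains a breakpoint, so the vertices whose
intervals contain no breakpoint induce a graph of pathwidth `w - 1`; colour them by induction.
Colour the other vertices by the parity of `⌊i / 2⌋`, where `brk i` is the first breakpoint
they contain. Each colour class falls apart into blocks, each meeting the crossing vertices of
only two consecutive breakpoints `p < q`. These vertices lie in bag `p` or `q`; as bag `p` has at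
most `w + 1` vertices and bags `p + 1` and `q` together at most `2w + 1`, they fit above the
inductive forests at a cost of `2w + 1` levels. Hence treedepth `(w + 1)^2 ≤ (w + 3)^w`.
-/

open scoped Finset

namespace ForestOrder

variable {V : Type*}

def Chain (F : ForestOrder V) (s : Finset V) : Prop :=
  ∀ u ∈ s, ∀ v ∈ s, F.le u v ∨ F.le v u

def discrete (V : Type*) : ForestOrder V where
  le := Eq
  refl _ := rfl
  antisymm _ _ h _ := h
  trans _ _ _ := Eq.trans
  downChain _ _ _ h h' := Or.inl (h.trans h'.symm)

def comap {W : Type*} (F : ForestOrder V) (f : W → V) (hf : Function.Injective f) :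
    ForestOrder W where
  le x y := F.le (f x) (f y)
  refl _ := F.refl _
  antisymm _ _ h h' := hf (F.antisymm _ _ h h')
  trans _ _ _ := F.trans _ _ _
  downChain _ _ _ := F.downChain _ _ _

/-- The vertices of `A`, linearly ordered, become common ancestors of all other vertices,
which keep their order from `F`. -/
def chainAbove [LinearOrder V] (F : ForestOrder V) (A : Set V) : ForestOrder V where
  le u v := (u ∈ A ∧ (v ∈ A → u ≤ v)) ∨ (u ∉ A ∧ v ∉ A ∧ F.le u v)
  refl v := by
    by_cases hv : v ∈ A
    · exact Or.inl ⟨hv, fun _ => le_rfl⟩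
    · exact Or.inr ⟨hv, hv, F.refl v⟩
  antisymm u v := by
    rintro (⟨hu, huv⟩ | ⟨hu, hv, huv⟩) (⟨hv', hvu⟩ | ⟨hv', hu', hvu⟩)
    exacts [le_antisymm (huv hv') (hvu hu), absurd hu hu', absurd hv' hv, F.antisymm _ _ huv hvu]
  trans u v w := by
    rintro (⟨hu, huv⟩ | ⟨hu, hv, huv⟩) (⟨hv', hvw⟩ | ⟨hv', hw, hvw⟩)
    · exact Or.inl ⟨hu, fun hw => (huv hv').trans (hvw hw)⟩
    · exact Or.inl ⟨hu, fun hw' => absurd hw' hw⟩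
    · exact absurd hv' hv
    · exact Or.inr ⟨hu, hw, F.trans _ _ _ huv hvw⟩
  downChain u v w := by
    rintro (⟨hu, huw⟩ | ⟨hu, hw, huw⟩) (⟨hv, hvw⟩ | ⟨hv, hw', hvw⟩)
    · exact (le_total u v).imp (fun h => Or.inl ⟨hu, fun _ => h⟩)
        (fun h => Or.inl ⟨hv, fun _ => h⟩)
    · exact Or.inl (Or.inl ⟨hu, fun hv' => absurd hv' hv⟩)
    · exact Or.inr (Or.inl ⟨hv, fun hu' => absurd hu' hu⟩)
    · exact (F.downChain _ _ _ huw hvw).imp (fun h => Or.inr ⟨hu, hv, h⟩)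
        (fun h => Or.inr ⟨hv, hu, h⟩)

def glue {ι : Type*} (key : V → ι) (F : ι → ForestOrder V) : ForestOrder V where
  le u v := u = v ∨ key u = key v ∧ (F (key u)).le u v
  refl _ := Or.inl rfl
  antisymm u v := by
    rintro (rfl | ⟨hk, huv⟩) (hvu | ⟨hk', hvu⟩)
    exacts [rfl, rfl, hvu.symm, (F (key u)).antisymm _ _ huv (hk ▸ hvu)]
  trans u v w := by
    rintro (rfl | ⟨hk, huv⟩) (rfl | ⟨hk', hvw⟩)
    exacts [Or.inl rfl, Or.inr ⟨hk', hvw⟩, Or.inr ⟨hk, huv⟩,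
      Or.inr ⟨hk.trans hk', (F _).trans _ _ _ huv (hk ▸ hvw)⟩]
  downChain u v w := by
    rintro (rfl | ⟨hk, huw⟩) (hvw | ⟨hk', hvw⟩)
    · exact Or.inl (Or.inl hvw.symm)
    · exact Or.inr (Or.inr ⟨hk', hvw⟩)
    · subst hvw; exact Or.inl (Or.inr ⟨hk, huw⟩)
    · refine ((F (key u)).downChain _ _ _ huw (hk ▸ hk' ▸ hvw)).imp
        (fun h => Or.inr ⟨hk.trans hk'.symm, h⟩) (fun h => Or.inr ⟨hk'.trans hk.symm, ?_⟩)
      rwa [hk', ← hk]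

end ForestOrder

section TreedepthOn

variable {V : Type*} {G : SimpleGraph V}

/-- `treedepthLE (G.induce S) d`, with the forest order taken on all of `V` so that nested vertex
sets need no subtypes. -/
def treedepthOnLE (G : SimpleGraph V) (S : Finset V) (d : ℕ) : Prop :=
  ∃ F : ForestOrder V, (∀ s ⊆ S, F.Chain s → #s ≤ d) ∧
    ∀ u ∈ S, ∀ v ∈ S, G.Adj u v → F.le u v ∨ F.le v u

theorem treedepthOnLE.mono {S T : Finset V} {d e : ℕ} (h : treedepthOnLE G S d) (hTS : T ⊆ S)
    (hde : d ≤ e) : treedepthOnLE G T e := by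
  obtain ⟨F, hchain, hadj⟩ := h
  exact ⟨F, fun s hs hF => (hchain s (hs.trans hTS) hF).trans hde,
    fun u hu v hv => hadj u (hTS hu) v (hTS hv)⟩

theorem treedepthOnLE_one {S : Finset V} (h : ∀ u ∈ S, ∀ v ∈ S, ¬ G.Adj u v) :
    treedepthOnLE G S 1 :=
  ⟨ForestOrder.discrete V, fun _ _ hs => Finset.card_le_one.2 fun u hu v hv =>
      (hs u hu v hv).elim id Eq.symm,
    fun u hu v hv huv => absurd huv (h u hu v hv)⟩

theorem treedepthOnLE.union [DecidableEq V] {S : Finset V} {d : ℕ} (h : treedepthOnLE G S d)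
    (A : Finset V) : treedepthOnLE G (A ∪ S) (#A + d) := by
  obtain ⟨F, hchain, hadj⟩ := h
  let _ := IsWellOrder.linearOrder (WellOrderingRel (α := V))
  refine ⟨F.chainAbove A, fun s hs hF => ?_, fun u hu v hv huv => ?_⟩
  · rw [← Finset.card_filter_add_card_filter_not (s := s) (fun v => v ∈ A)]
    gcongr
    · exact fun v hv => (Finset.mem_filter.1 hv).2
    · refine hchain _ (fun v hv => ?_) fun u hu v hv => ?_
      · obtain ⟨hvs, hvA⟩ := Finset.mem_filter.1 hv
        exact (Finset.mem_union.1 (hs hvs)).resolve_left hvA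
      · obtain ⟨hus, huA⟩ := Finset.mem_filter.1 hu
        obtain ⟨hvs, hvA⟩ := Finset.mem_filter.1 hv
        rcases hF u hus v hvs with (⟨h, _⟩ | ⟨_, _, h⟩) | (⟨h, _⟩ | ⟨_, _, h⟩)
        exacts [absurd h huA, Or.inl h, absurd h hvA, Or.inr h]
  · by_cases huA : u ∈ A <;> by_cases hvA : v ∈ A
    · exact (le_total u v).imp (fun h => Or.inl ⟨huA, fun _ => h⟩)
        (fun h => Or.inl ⟨hvA, fun _ => h⟩)
    · exact Or.inl (Or.inl ⟨huA, fun h => absurd h hvA⟩)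
    · exact Or.inr (Or.inl ⟨hvA, fun h => absurd h huA⟩)
    · have hu' := (Finset.mem_union.1 hu).resolve_left huA
      have hv' := (Finset.mem_union.1 hv).resolve_left hvA
      exact (hadj u hu' v hv' huv).imp (fun h => Or.inr ⟨huA, hvA, h⟩)
        (fun h => Or.inr ⟨hvA, huA, h⟩)

theorem treedepthOnLE_of_forall_fiber {ι : Type*} [DecidableEq ι] {S : Finset V} {d : ℕ}
    (key : V → ι) (hsep : ∀ u ∈ S, ∀ v ∈ S, G.Adj u v → key u = key v)
    (h : ∀ j, treedepthOnLE G (S.filter (key · = j)) d) : treedepthOnLE G S d := by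
  choose F hchain hadj using h
  refine ⟨ForestOrder.glue key F, fun s hs hF => ?_, fun u hu v hv huv => ?_⟩
  · rcases s.eq_empty_or_nonempty with rfl | ⟨x, hx⟩
    · simp
    have hkey : ∀ v ∈ s, key v = key x := fun v hv => by
      rcases hF v hv x hx with (h | ⟨h, _⟩) | (h | ⟨h, _⟩)
      exacts [h ▸ rfl, h, h ▸ rfl, h.symm]
    refine hchain (key x) s (fun v hv => Finset.mem_filter.2 ⟨hs hv, hkey v hv⟩)
      fun u hu v hv => ?_
    rcases hF u hu v hv with (rfl | ⟨-, h⟩) | (rfl | ⟨-, h⟩)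
    · exact Or.inl ((F _).refl _)
    · exact Or.inl (hkey u hu ▸ h)
    · exact Or.inl ((F _).refl _)
    · exact Or.inr (hkey v hv ▸ h)
  · have hk := hsep u hu v hv huv
    refine (hadj (key u) u (Finset.mem_filter.2 ⟨hu, rfl⟩) v
      (Finset.mem_filter.2 ⟨hv, hk.symm⟩) huv).imp (fun h => Or.inr ⟨hk, h⟩)
      (fun h => Or.inr ⟨hk.symm, hk ▸ h⟩)

theorem treedepthOnLE.treedepthLE {S : Finset V} {d : ℕ} (h : treedepthOnLE G S d) :
    treedepthLE (G.induce (S : Set V)) d := by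
  obtain ⟨F, hchain, hadj⟩ := h
  refine ⟨F.comap Subtype.val Subtype.val_injective, fun s hs => ?_,
    fun u v huv => hadj u u.2 v v.2 huv⟩
  rw [← Finset.card_map (Function.Embedding.subtype _)]
  refine hchain _ (fun v hv => ?_) fun u hu v hv => ?_
  · obtain ⟨x, -, rfl⟩ := Finset.mem_map.1 hv
    exact x.2
  · obtain ⟨x, hx, rfl⟩ := Finset.mem_map.1 hu
    obtain ⟨y, hy, rfl⟩ := Finset.mem_map.1 hv
    exact hs x hx y hy

end TreedepthOn

/-- Intervals `[l v, r v]` such that adjacent vertices have intersecting intervals; the bags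
of the corresponding path-decomposition are the sets of intervals through a point. -/
structure IntervalModel {V : Type*} (G : SimpleGraph V) where
  l : V → ℕ
  r : V → ℕ
  l_le_r : ∀ v, l v ≤ r v
  l_le_r_of_adj : ∀ u v, G.Adj u v → l u ≤ r v

namespace IntervalModel

variable {V : Type*} {G : SimpleGraph V} (I : IntervalModel G)

def bag (S : Finset V) (t : ℕ) : Finset V :=
  S.filter fun v => I.l v ≤ t ∧ t ≤ I.r v

variable {I}

@[simp]
theorem mem_bag {S : Finset V} {t : ℕ} {v : V} : v ∈ I.bag S t ↔ v ∈ S ∧ I.l v ≤ t ∧ t ≤ I.r v :=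
  Finset.mem_filter

theorem bag_mono {S T : Finset V} (h : S ⊆ T) (t : ℕ) : I.bag S t ⊆ I.bag T t :=
  Finset.filter_subset_filter _ h

theorem not_adj_of_card_bag_le_one {S : Finset V} (hS : ∀ t, #(I.bag S t) ≤ 1) {u v : V}
    (hu : u ∈ S) (hv : v ∈ S) : ¬ G.Adj u v := fun huv =>
  have hut : u ∈ I.bag S (max (I.l u) (I.l v)) :=
    mem_bag.2 ⟨hu, le_max_left _ _, max_le (I.l_le_r u) (I.l_le_r_of_adj v u huv.symm)⟩
  have hvt : v ∈ I.bag S (max (I.l u) (I.l v)) :=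
    mem_bag.2 ⟨hv, le_max_right _ _, max_le (I.l_le_r_of_adj u v huv) (I.l_le_r v)⟩
  G.ne_of_adj huv (Finset.card_le_one.1 (hS _) u hut v hvt)

/-- If every vertex of `Z` outside `R` lies in bag `p` or bag `q ≥ p`, then `Z` is obtained from
`R` by adding at most `a` vertices along each root-to-leaf path: first the vertices through both
`p` and `p + 1`, then those of `Z` left of this cut in bag `p`, or those right of it in bag `q`. -/
theorem treedepthOnLE_of_subset_bag_union [DecidableEq V] {Z R : Finset V} {p q a d : ℕ}
    (hpq : p ≤ q) (hR : treedepthOnLE G R d)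
    (hZ : ∀ v ∈ Z, v ∉ R → v ∈ I.bag Z p ∪ I.bag Z q)
    (hp : #(I.bag Z p) ≤ a) (hq : #(I.bag Z (p + 1) ∪ I.bag Z q) ≤ a) :
    treedepthOnLE G Z (a + d) := by
  set A := I.bag Z p ∩ I.bag Z (p + 1)
  have hAp : A ⊆ I.bag Z p := Finset.inter_subset_left
  have hAZ : A ⊆ Z := hAp.trans (Finset.filter_subset _ _)
  have hcut : ∀ v ∈ Z \ A, I.r v ≤ p ∨ p < I.l v := by
    intro v hv
    obtain ⟨hvZ, hvA⟩ := Finset.mem_sdiff.1 hv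
    by_contra! h
    exact hvA (Finset.mem_inter.2 ⟨mem_bag.2 ⟨hvZ, by omega, by omega⟩,
      mem_bag.2 ⟨hvZ, by omega, by omega⟩⟩)
  have hside : ∀ j : Bool, treedepthOnLE G ((Z \ A).filter fun v => decide (p < I.l v) = j)
      (a - #A + d) := by
    intro j
    refine (hR.union (bif j then I.bag Z q \ A else I.bag Z p \ A)).mono (fun v hv => ?_) ?_
    · obtain ⟨hv, hj⟩ := Finset.mem_filter.1 hv
      obtain ⟨hvZ, hvA⟩ := Finset.mem_sdiff.1 hv
      refine Finset.mem_union.2 ((em (v ∈ R)).symm.imp (fun hvR => ?_) id)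
      have hvpq := Finset.mem_union.1 (hZ v hvZ hvR)
      simp only [mem_bag, hvZ, true_and] at hvpq
      have hvcut := hcut v hv
      cases j
      · have : ¬ p < I.l v := by simpa using hj
        exact Finset.mem_sdiff.2 ⟨mem_bag.2 ⟨hvZ, by omega, by omega⟩, hvA⟩
      · have : p < I.l v := by simpa using hj
        exact Finset.mem_sdiff.2 ⟨mem_bag.2 ⟨hvZ, by omega, by omega⟩, hvA⟩
    · cases j
      · have := Finset.card_sdiff_of_subset hAp
        have := Finset.card_le_card hAp
        dsimp only [cond_false]
        omega
      · have := Finset.card_sdiff_add_card (I.bag Z q) A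
        have := Finset.card_le_card (Finset.union_subset Finset.subset_union_right
          (Finset.inter_subset_right.trans Finset.subset_union_left) :
          I.bag Z q ∪ A ⊆ I.bag Z (p + 1) ∪ I.bag Z q)
        dsimp only [cond_true]
        omega
  have := (treedepthOnLE_of_forall_fiber (fun v => decide (p < I.l v)) ?_ hside).union A
  · rw [Finset.union_sdiff_of_subset hAZ] at this
    exact this.mono subset_rfl (by have := (Finset.card_le_card hAp).trans hp; omega)
  · intro u hu v hv huv
    have := I.l_le_r_of_adj u v huv
    have := I.l_le_r_of_adj v u huv.symm
    rcases hcut u hu with hu | hu <;> rcases hcut v hv with hv | hv <;>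
      simp only [decide_eq_decide] <;> omega

section Breakpoints

variable (I) (S : Finset V)

def brk : ℕ → ℕ
  | 0 => 0
  | i + 1 => max (brk i + 1) ((I.bag S (brk i + 1)).sup I.r)

variable {I S}

theorem lt_brk_succ (i : ℕ) : I.brk S i < I.brk S (i + 1) :=
  (Nat.lt_succ_self _).trans_le (le_max_left _ _)

theorem strictMono_brk : StrictMono (I.brk S) := strictMono_nat_of_lt_succ lt_brk_succ

variable (I S)

theorem exists_l_le_brk (v : V) : ∃ j, I.l v ≤ I.brk S j :=
  ⟨I.l v, strictMono_brk.id_le _⟩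

def brkIndex (v : V) : ℕ := Nat.find (I.exists_l_le_brk S v)

def Crosses (v : V) : Prop := I.brk S (I.brkIndex S v) ≤ I.r v

instance : DecidablePred (I.Crosses S) := fun _ => inferInstanceAs (Decidable (_ ≤ _))

def nonCrossing : Finset V := S.filter fun v => ¬ I.Crosses S v

variable {I S}

theorem r_le_brk_succ {i : ℕ} {v : V} (hv : v ∈ I.bag S (I.brk S i + 1)) :
    I.r v ≤ I.brk S (i + 1) :=
  le_max_of_le_right (Finset.le_sup hv)

theorem brk_succ_of_bag_eq_empty {i : ℕ} (h : I.bag S (I.brk S i + 1) = ∅) :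
    I.brk S (i + 1) = I.brk S i + 1 := by
  simp [brk, h]

theorem exists_mem_bag_r_eq_brk_succ {i : ℕ} (h : (I.bag S (I.brk S i + 1)).Nonempty) :
    ∃ y ∈ I.bag S (I.brk S i + 1), I.r y = I.brk S (i + 1) := by
  obtain ⟨y, hy, hsup⟩ := Finset.exists_mem_eq_sup _ h I.r
  exact ⟨y, hy, by rw [brk, hsup, max_eq_right (mem_bag.1 hy).2.2]⟩

theorem card_bag_union_bag_le [DecidableEq V] {w : ℕ} (hS : ∀ t, #(I.bag S t) ≤ w + 1) (i : ℕ) :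
    #(I.bag S (I.brk S i + 1) ∪ I.bag S (I.brk S (i + 1))) ≤ 2 * w + 1 := by
  rcases (I.bag S (I.brk S i + 1)).eq_empty_or_nonempty with h | h
  · rw [h, Finset.empty_union]
    have := hS (I.brk S (i + 1))
    omega
  obtain ⟨y, hy, hry⟩ := exists_mem_bag_r_eq_brk_succ h
  have hy' : y ∈ I.bag S (I.brk S (i + 1)) := by
    obtain ⟨hyS, hl, -⟩ := mem_bag.1 hy
    exact mem_bag.2 ⟨hyS, hl.trans (lt_brk_succ i), hry.ge⟩
  have := Finset.card_union_add_card_inter (I.bag S (I.brk S i + 1)) (I.bag S (I.brk S (i + 1)))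
  have := Finset.card_pos.2 ⟨y, Finset.mem_inter.2 ⟨hy, hy'⟩⟩
  have := hS (I.brk S i + 1)
  have := hS (I.brk S (i + 1))
  omega

theorem nonCrossing_subset : I.nonCrossing S ⊆ S := Finset.filter_subset _ _

variable (I S) in
theorem l_le_brk_brkIndex (v : V) : I.l v ≤ I.brk S (I.brkIndex S v) :=
  Nat.find_spec (I.exists_l_le_brk S v)

theorem brk_lt_l_of_lt_brkIndex {v : V} {j : ℕ} (h : j < I.brkIndex S v) : I.brk S j < I.l v :=
  not_le.1 (Nat.find_min (I.exists_l_le_brk S v) h)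

theorem brkIndex_le_of_l_le_brk {v : V} {j : ℕ} (h : I.l v ≤ I.brk S j) : I.brkIndex S v ≤ j :=
  Nat.find_min' _ h

theorem r_le_brk_brkIndex_succ {v : V} (hv : v ∈ S) : I.r v ≤ I.brk S (I.brkIndex S v + 1) := by
  by_cases h : I.r v ≤ I.brk S (I.brkIndex S v)
  · exact h.trans (lt_brk_succ _).le
  · exact r_le_brk_succ (mem_bag.2 ⟨hv, (I.l_le_brk_brkIndex S v).trans (Nat.le_succ _), by omega⟩)

theorem crosses_of_le_brk {v : V} {j : ℕ} (hl : I.l v ≤ I.brk S j) (hr : I.brk S j ≤ I.r v) :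
    I.Crosses S v :=
  (strictMono_brk.monotone (brkIndex_le_of_l_le_brk hl)).trans hr

variable (I) in
theorem brkIndex_le_brkIndex_add_one_of_adj {u v : V} (huv : G.Adj u v) (hv : v ∈ S) :
    I.brkIndex S u ≤ I.brkIndex S v + 1 :=
  brkIndex_le_of_l_le_brk ((I.l_le_r_of_adj u v huv).trans (r_le_brk_brkIndex_succ hv))

theorem brkIndex_le_brkIndex_of_adj {u v : V} (huv : G.Adj u v) (hv : ¬ I.Crosses S v) :
    I.brkIndex S u ≤ I.brkIndex S v :=
  brkIndex_le_of_l_le_brk ((I.l_le_r_of_adj u v huv).trans (not_le.1 hv).le)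

/-- Adjacent vertices whose crossings occur only at indices `≡ c, c + 1 (mod 4)` lie in the same
block of four consecutive indices. -/
theorem brkIndex_block_eq_of_adj {u v : V} {c : ℕ} (huv : G.Adj u v) (hu : u ∈ S) (hv : v ∈ S)
    (hcu : I.Crosses S u → I.brkIndex S u % 4 = c ∨ I.brkIndex S u % 4 = c + 1)
    (hcv : I.Crosses S v → I.brkIndex S v % 4 = c ∨ I.brkIndex S v % 4 = c + 1) :
    (I.brkIndex S u + 4 - c) / 4 = (I.brkIndex S v + 4 - c) / 4 := by
  have := I.brkIndex_le_brkIndex_add_one_of_adj huv hv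
  have := I.brkIndex_le_brkIndex_add_one_of_adj huv.symm hu
  by_cases hu' : I.Crosses S u <;> by_cases hv' : I.Crosses S v
  · have := hcu hu'
    have := hcv hv'
    omega
  · have := hcu hu'
    have := brkIndex_le_brkIndex_of_adj huv hv'
    omega
  · have := hcv hv'
    have := brkIndex_le_brkIndex_of_adj huv.symm hu'
    omega
  · have := brkIndex_le_brkIndex_of_adj huv hv'
    have := brkIndex_le_brkIndex_of_adj huv.symm hu'
    omega

/-- Every bag strictly between two consecutive breakpoints contains a crossing vertex: the
interval realising the later breakpoint. -/
theorem card_bag_nonCrossing_le {w : ℕ} (hS : ∀ t, #(I.bag S t) ≤ w + 2) (t : ℕ) :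
    #(I.bag (I.nonCrossing S) t) ≤ w + 1 := by
  rcases (I.bag (I.nonCrossing S) t).eq_empty_or_nonempty with h | ⟨x, hx⟩
  · simp [h]
  obtain ⟨hxS, hxl, hxr⟩ := mem_bag.1 (bag_mono nonCrossing_subset t hx)
  have hx' : ¬ I.Crosses S x := (Finset.mem_filter.1 (mem_bag.1 hx).1).2
  obtain ⟨j, hj⟩ : ∃ j, I.brkIndex S x = j + 1 :=
    Nat.exists_eq_add_one.2 (Nat.pos_of_ne_zero fun h0 => by simp [Crosses, h0, brk] at hx')
  have hjt : I.brk S j < t := (brk_lt_l_of_lt_brkIndex (hj ▸ Nat.lt_succ_self j)).trans_le hxl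
  have htj : t < I.brk S (j + 1) := hxr.trans_lt (hj ▸ not_le.1 hx')
  have hne : (I.bag S (I.brk S j + 1)).Nonempty := by
    by_contra h
    rw [brk_succ_of_bag_eq_empty (Finset.not_nonempty_iff_eq_empty.1 h)] at htj
    omega
  obtain ⟨y, hy, hry⟩ := exists_mem_bag_r_eq_brk_succ hne
  obtain ⟨hyS, hyl, -⟩ := mem_bag.1 hy
  have hyt : y ∈ I.bag S t := mem_bag.2 ⟨hyS, by omega, by omega⟩
  have hy' : y ∉ I.bag (I.nonCrossing S) t := fun h =>
    (Finset.mem_filter.1 (mem_bag.1 h).1).2 (crosses_of_le_brk (j := j + 1)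
      (hyl.trans (lt_brk_succ j)) hry.ge)
  have := Finset.card_lt_card (Finset.ssubset_iff_of_subset
    (bag_mono nonCrossing_subset t) |>.2 ⟨y, hyt, hy'⟩)
  have := hS t
  omega

end Breakpoints

/-- Colour crossing vertices by the parity of `brkIndex / 2`. In colour class `b` every crossing
vertex has `brkIndex ≡ c, c + 1 (mod 4)` with `c = 2b`, so the class splits into blocks: the
crossing vertices through `brk i` or `brk (i + 1)` for one `i ≡ c (mod 4)`, together with the
non-crossing vertices between `brk (i - 1)` and `brk (i + 3)`. -/
theorem exists_coloring_of_nonCrossing [DecidableEq V] {S : Finset V} {k d : ℕ}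
    (hS : ∀ t, #(I.bag S t) ≤ k + 2) {g : V → Fin 2}
    (hg : ∀ b, treedepthOnLE G ((I.nonCrossing S).filter (g · = b)) d) :
    ∃ f : V → Fin 2, ∀ b, treedepthOnLE G (S.filter (f · = b)) (2 * k + 3 + d) := by
  let f : V → Fin 2 := fun v =>
    if I.Crosses S v then (if I.brkIndex S v % 4 < 2 then 0 else 1) else g v
  refine ⟨f, fun b => ?_⟩
  set c := 2 * b.val
  have hcross : ∀ v, I.Crosses S v → f v = b →
      I.brkIndex S v % 4 = c ∨ I.brkIndex S v % 4 = c + 1 := by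
    intro v hv hfv
    simp only [f, if_pos hv] at hfv
    split_ifs at hfv <;> subst hfv <;> simp only [c, Fin.val_zero, Fin.val_one] <;> omega
  have hnon : ∀ v ∈ S, ¬ I.Crosses S v → f v = b →
      v ∈ (I.nonCrossing S).filter (g · = b) := by
    intro v hvS hv hfv
    simp only [f, if_neg hv] at hfv
    exact Finset.mem_filter.2 ⟨Finset.mem_filter.2 ⟨hvS, hv⟩, hfv⟩
  refine treedepthOnLE_of_forall_fiber (fun v => (I.brkIndex S v + 4 - c) / 4) ?_ fun j => ?_
  · intro u hu v hv huv
    obtain ⟨huS, hfu⟩ := Finset.mem_filter.1 hu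
    obtain ⟨hvS, hfv⟩ := Finset.mem_filter.1 hv
    exact brkIndex_block_eq_of_adj huv huS hvS (hcross u · hfu) (hcross v · hfv)
  · set i := 4 * j + c - 4
    have hZS : (S.filter (f · = b)).filter (fun v => (I.brkIndex S v + 4 - c) / 4 = j) ⊆ S :=
      (Finset.filter_subset _ _).trans (Finset.filter_subset _ _)
    refine I.treedepthOnLE_of_subset_bag_union (lt_brk_succ i).le (hg b) (fun v hv hvR => ?_)
      ((Finset.card_le_card (bag_mono hZS _)).trans ((hS _).trans (by omega)))
      ((Finset.card_le_card (Finset.union_subset_union (bag_mono hZS _) (bag_mono hZS _))).trans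
        (card_bag_union_bag_le hS i))
    obtain ⟨hv', hj⟩ := Finset.mem_filter.1 hv
    obtain ⟨hvS, hfv⟩ := Finset.mem_filter.1 hv'
    have hcv : I.Crosses S v := by_contra fun h => hvR (hnon v hvS h hfv)
    have := hcross v hcv hfv
    have hindex : I.brkIndex S v = i ∨ I.brkIndex S v = i + 1 := by omega
    have hl := I.l_le_brk_brkIndex S v
    rw [Finset.mem_union, mem_bag, mem_bag]
    rcases hindex with h | h
    · exact Or.inl ⟨hv, h ▸ hl, h ▸ hcv⟩
    · exact Or.inr ⟨hv, h ▸ hl, h ▸ hcv⟩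

theorem exists_coloring_treedepthOnLE [DecidableEq V] (k : ℕ) {S : Finset V}
    (hS : ∀ t, #(I.bag S t) ≤ k + 1) :
    ∃ f : V → Fin 2, ∀ b, treedepthOnLE G (S.filter (f · = b)) ((k + 1) ^ 2) := by
  induction k generalizing S with
  | zero =>
    exact ⟨fun _ => 0, fun b => treedepthOnLE_one fun u hu v hv =>
      not_adj_of_card_bag_le_one hS (Finset.mem_filter.1 hu).1 (Finset.mem_filter.1 hv).1⟩
  | succ k ih =>
    obtain ⟨g, hg⟩ := ih (card_bag_nonCrossing_le hS)
    obtain ⟨f, hf⟩ := exists_coloring_of_nonCrossing hS hg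
    exact ⟨f, fun b => (hf b).mono subset_rfl (by ring_nf; omega)⟩

end IntervalModel

section PathDecomp

variable {V : Type*} {G : SimpleGraph V} {n : ℕ} {B : Fin n → Finset V}

theorem PathDecomp.finite (h : PathDecomp G n B) : Finite V := by
  classical
  refine Set.finite_univ_iff.1 ((Finset.univ.biUnion B).finite_toSet.subset fun v _ => ?_)
  obtain ⟨i, hi⟩ := h.1 v
  exact Finset.mem_coe.2 (Finset.mem_biUnion.2 ⟨i, Finset.mem_univ _, hi⟩)

theorem PathDecomp.exists_intervalModel [Fintype V] (h : PathDecomp G n B) {w : ℕ}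
    (hB : ∀ i, #(B i) ≤ w + 1) : ∃ I : IntervalModel G, ∀ t, #(I.bag Finset.univ t) ≤ w + 1 := by
  classical
  obtain ⟨hcov, hconv, hedge⟩ := h
  let T : V → Finset (Fin n) := fun v => Finset.univ.filter (v ∈ B ·)
  have hT : ∀ v, (T v).Nonempty := fun v =>
    let ⟨i, hi⟩ := hcov v
    ⟨i, Finset.mem_filter.2 ⟨Finset.mem_univ _, hi⟩⟩
  have hmemT : ∀ {v i}, i ∈ T v ↔ v ∈ B i := by simp [T]
  let I : IntervalModel G :=
    { l := fun v => (T v).min' (hT v)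
      r := fun v => (T v).max' (hT v)
      l_le_r := fun v => Finset.min'_le_max' _ (hT v)
      l_le_r_of_adj := fun u v huv =>
        let ⟨i, hu, hv⟩ := hedge u v huv
        ((T u).min'_le i (hmemT.2 hu)).trans ((T v).le_max' i (hmemT.2 hv)) }
  refine ⟨I, fun t => ?_⟩
  by_cases ht : t < n
  · refine (Finset.card_le_card fun v hv => ?_).trans (hB ⟨t, ht⟩)
    obtain ⟨-, hl, hr⟩ := IntervalModel.mem_bag.1 hv
    exact hconv v _ ⟨t, ht⟩ _ hl hr (hmemT.1 ((T v).min'_mem _)) (hmemT.1 ((T v).max'_mem _))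
  · rw [Finset.eq_empty_of_forall_notMem fun v hv =>
      ht ((IntervalModel.mem_bag.1 hv).2.2.trans_lt ((T v).max' (hT v)).isLt)]
    simp

end PathDecomp

theorem treedepthLE.mono {V : Type*} {G : SimpleGraph V} {d e : ℕ} (h : treedepthLE G d)
    (hde : d ≤ e) : treedepthLE G e :=
  let ⟨F, hchain, hadj⟩ := h
  ⟨F, fun s hs => (hchain s hs).trans hde, hadj⟩

theorem pathwidthLE.exists_coloring_treedepthLE_sq {V : Type*} {G : SimpleGraph V} {w : ℕ}
    (h : pathwidthLE G w) :
    ∃ f : V → Fin 2, ∀ b, treedepthLE (G.induce {v | f v = b}) ((w + 1) ^ 2) := by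
  classical
  obtain ⟨n, B, hB, hcard⟩ := h
  have := hB.finite
  let _ := Fintype.ofFinite V
  obtain ⟨I, hI⟩ := hB.exists_intervalModel hcard
  obtain ⟨f, hf⟩ := I.exists_coloring_treedepthOnLE w hI
  refine ⟨f, fun b => ?_⟩
  have := (hf b).treedepthLE
  rwa [Finset.coe_filter_univ] at this

theorem add_one_sq_le_add_three_pow (w : ℕ) : (w + 1) ^ 2 ≤ (w + 3) ^ w := by
  rcases w with _ | _ | w
  · norm_num
  · norm_num
  · calc (w + 2 + 1) ^ 2 ≤ (w + 2 + 3) ^ 2 := by gcongr; omega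
      _ ≤ (w + 2 + 3) ^ (w + 2) := Nat.pow_le_pow_right (by omega) (by omega)

theorem stmt3_general {V : Type*} (G : SimpleGraph V) (w : ℕ)
    (hpw : pathwidthLE G w) :
    ∃ f : V → Fin 2, ∀ b : Fin 2,
      treedepthLE (G.induce {v | f v = b}) ((w + 3) ^ w) := by
  obtain ⟨f, hf⟩ := hpw.exists_coloring_treedepthLE_sq
  exact ⟨f, fun b => (hf b).mono (add_one_sq_le_add_three_pow w)⟩

theorem stmt3 {V : Type*} (G : SimpleGraph V) (w : ℕ) (hw : 1 ≤ w)
    (hpw : pathwidthLE G w) :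
    ∃ f : V → Fin 2, ∀ b : Fin 2,
      treedepthLE (G.induce {v | f v = b}) ((w + 3) ^ w) :=
  stmt3_general G w hpw
end

section
/- For all integers h ≥ 1 and k ≥ 1, there is no (h−1)-colouring of C⟨h,k⟩ with defect k−1; that is, in any vertex colouring of C⟨h,k⟩ with h−1 colours, some monochromatic component contains a vertex of degree at least k within that component. -/
/-!
Suppose every vertex has fewer than `k` neighbours of its own colour. Then each vertex `v`
has a child below which the colour of `v` never occurs: otherwise one descendant of that
colour below each of the `k` children gives `k` neighbours of `v` of its colour. Following
such children from the root down to a leaf, every vertex on the path contributes a colour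
missing strictly below it, so the `h` vertices of the path carry `h` distinct colours,
which is more than `h - 1`.
-/

/-- Vertices of the complete `k`-ary tree of depth `h`: sequences over `Fin k`
of length `< h` (the root is the empty sequence). -/
def CVert (h k : ℕ) : Type := {l : List (Fin k) // l.length < h}

/-- `C⟨h,k⟩`, the closure of the complete `k`-ary tree of depth `h`:
two vertices are adjacent iff one is a strict ancestor (proper prefix)
of the other. -/
def Cgraph (h k : ℕ) : SimpleGraph (CVert h k) where
  Adj a b := a ≠ b ∧ (a.1 <+: b.1 ∨ b.1 <+: a.1)
  symm := ⟨fun _ _ ⟨hne, hp⟩ => ⟨hne.symm, hp.symm⟩⟩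
  loopless := ⟨fun _ ⟨hne, _⟩ => hne rfl⟩

theorem List.eq_of_append_singleton_prefix_of_append_singleton_prefix {α : Type*}
    {v l : List α} {i j : α} (hi : v ++ [i] <+: l) (hj : v ++ [j] <+: l) : i = j := by
  rcases List.prefix_or_prefix_of_prefix hi hj with hp | hp
  · simpa using List.append_cancel_left (hp.eq_of_length (by simp))
  · simpa using (List.append_cancel_left (hp.eq_of_length (by simp))).symm

namespace Cgraph

variable {h k : ℕ}

theorem adj_of_append_singleton_prefix (v w : CVert h k) {i : Fin k}
    (hvw : v.1 ++ [i] <+: w.1) : (Cgraph h k).Adj v w := by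
  have hpre : v.1 <+: w.1 := (List.prefix_append v.1 [i]).trans hvw
  have hlen : v.1.length < w.1.length := by
    simpa using hvw.length_le
  exact ⟨fun hvw => by simp [hvw] at hlen, Or.inl hpre⟩

variable {C : Type*} {f : CVert h k → C}

theorem exists_child_avoiding_color
    (hf : ∀ (v : CVert h k) (S : Finset (CVert h k)),
      (∀ u ∈ S, (Cgraph h k).Adj v u ∧ f u = f v) → S.card < k)
    (v : CVert h k) : ∃ i : Fin k, ∀ w : CVert h k, v.1 ++ [i] <+: w.1 → f w ≠ f v := by
  by_contra! hcolor
  choose w hw hfw using hcolor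
  have hinj : Function.Injective w := fun i j hij =>
    List.eq_of_append_singleton_prefix_of_append_singleton_prefix (hw i) (hij ▸ hw j)
  have hsame : ∀ u ∈ Finset.univ.map ⟨w, hinj⟩, (Cgraph h k).Adj v u ∧ f u = f v := by
    simp only [Finset.mem_map, Finset.mem_univ, true_and, Function.Embedding.coeFn_mk]
    rintro u ⟨i, rfl⟩
    exact ⟨adj_of_append_singleton_prefix v (w i) (hw i), hfw i⟩
  simpa using hf v _ hsame

theorem exists_colors_below
    (hf : ∀ (v : CVert h k) (S : Finset (CVert h k)),
      (∀ u ∈ S, (Cgraph h k).Adj v u ∧ f u = f v) → S.card < k) :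
    ∀ (m : ℕ) (v : List (Fin k)), v.length + m ≤ h →
      ∃ S : Finset C, m ≤ S.card ∧ ∀ c ∈ S, ∃ w : CVert h k, v <+: w.1 ∧ f w = c := by
  classical
  intro m
  induction m with
  | zero => exact fun _ _ => ⟨∅, le_rfl, by simp⟩
  | succ m ih =>
    intro v hlen
    let vv : CVert h k := ⟨v, by omega⟩
    obtain ⟨i, hi⟩ := exists_child_avoiding_color hf vv
    obtain ⟨S, hcard, hS⟩ := ih (v ++ [i]) (by simp; omega)
    have hnotMem : f vv ∉ S := fun hmem => by
      obtain ⟨w, hw, hfw⟩ := hS _ hmem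
      exact hi w hw hfw
    refine ⟨insert (f vv) S, by rw [Finset.card_insert_of_notMem hnotMem]; omega, ?_⟩
    simp only [Finset.mem_insert, forall_eq_or_imp]
    refine ⟨⟨vv, List.prefix_refl v, rfl⟩, fun c hc => ?_⟩
    obtain ⟨w, hw, hfw⟩ := hS c hc
    exact ⟨w, (List.prefix_append v [i]).trans hw, hfw⟩

end Cgraph

theorem stmt6_general (h k : ℕ) (hh : 1 ≤ h)
    (f : CVert h k → Fin (h - 1)) :
    ∃ (v : CVert h k) (S : Finset (CVert h k)),
      (∀ u ∈ S, (Cgraph h k).Adj v u ∧ f u = f v) ∧ k ≤ S.card := by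
  by_contra! hf
  obtain ⟨S, hcard, -⟩ := Cgraph.exists_colors_below hf h [] (by simp)
  have hle : S.card ≤ h - 1 := by simpa using S.card_le_univ
  omega

/-- In any `(h-1)`-colouring of `C⟨h,k⟩`, some vertex has at least `k`
neighbours of its own colour; that is, some monochromatic component has a
vertex of degree at least `k` within that component. -/
theorem stmt6 (h k : ℕ) (hh : 1 ≤ h) (hk : 1 ≤ k)
    (f : CVert h k → Fin (h - 1)) :
    ∃ (v : CVert h k) (S : Finset (CVert h k)),
      (∀ u ∈ S, (Cgraph h k).Adj v u ∧ f u = f v) ∧ k ≤ S.card :=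
  stmt6_general h k hh f
end

section
/- For all integers h ≥ 1 and k ≥ 1, in any vertex colouring of C⟨h,k⟩ with h−1 colours, some monochromatic component has more than k vertices (i.e., there is no (h−1)-colouring with clustering k). -/
/-!
Suppose every monochromatic component has at most `k` vertices. Walk down from the root,
keeping the invariant that the subtree below the current vertex `p` at depth `i` avoids `i`
colours. Since `p` is adjacent to all of its descendants, if each of the `k` child subtrees
contained a vertex of the colour of `p`, those vertices together with `p` would form a
monochromatic component of size `k + 1`. So some child subtree also avoids the colour of `p`,
and we descend into it with one more forbidden colour. At depth `h - 1` all colours are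
forbidden, yet the current vertex has one.
-/

theorem List.eq_of_append_singleton_isPrefix {α : Type*} {l m : List α} {a b : α}
    (ha : l ++ [a] <+: m) (hb : l ++ [b] <+: m) : a = b := by
  have hab : l ++ [a] = l ++ [b] :=
    (List.prefix_of_prefix_length_le ha hb (by simp)).eq_of_length (by simp)
  simpa using hab

namespace SimpleGraph

variable {V α : Type*} (G : SimpleGraph V)

def MonoReachable (f : V → α) (v u : V) : Prop :=
  ∃ w : G.Walk v u, ∀ x ∈ w.support, f x = f v

variable {G}

theorem MonoReachable.refl (f : V → α) (v : V) : G.MonoReachable f v v :=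
  ⟨.nil, by simp⟩

theorem MonoReachable.of_adj {f : V → α} {v u : V} (hadj : G.Adj v u) (hf : f u = f v) :
    G.MonoReachable f v u :=
  ⟨hadj.toWalk, by simp [hf]⟩

end SimpleGraph

namespace CVert

variable {h k : ℕ}

instance : DecidableEq (CVert h k) :=
  inferInstanceAs (DecidableEq {l : List (Fin k) // l.length < h})

theorem length_lt_of_append_isPrefix {p u : CVert h k} {j : Fin k} (hu : p.1 ++ [j] <+: u.1) :
    p.1.length < u.1.length := by
  simpa using hu.length_le

theorem adj_of_append_isPrefix {p u : CVert h k} {j : Fin k} (hu : p.1 ++ [j] <+: u.1) :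
    (Cgraph h k).Adj p u :=
  ⟨by rintro rfl; exact (length_lt_of_append_isPrefix hu).false,
    Or.inl ((List.prefix_append _ _).trans hu)⟩

theorem large_monoComponent_or_exists_child_avoiding {α : Type*} (f : CVert h k → α)
    (p : CVert h k) :
    (∃ S : Finset (CVert h k), (∀ u ∈ S, (Cgraph h k).MonoReachable f p u) ∧ k < S.card) ∨
      ∃ j : Fin k, ∀ u : CVert h k, p.1 ++ [j] <+: u.1 → f u ≠ f p := by
  by_cases hall : ∀ j : Fin k, ∃ u : CVert h k, p.1 ++ [j] <+: u.1 ∧ f u = f p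
  · left
    choose u hu hfu using hall
    have hinj : Function.Injective u := fun a b hab =>
      List.eq_of_append_singleton_isPrefix (hu a) (hab ▸ hu b)
    have hp : p ∉ Finset.univ.image u := by
      simp only [Finset.mem_image, Finset.mem_univ, true_and, not_exists]
      rintro j rfl
      exact (length_lt_of_append_isPrefix (hu j)).false
    refine ⟨insert p (Finset.univ.image u), ?_, ?_⟩
    · simp only [Finset.mem_insert, Finset.mem_image, Finset.mem_univ, true_and]
      rintro _ (rfl | ⟨j, rfl⟩)
      · exact .refl f _
      · exact .of_adj (adj_of_append_isPrefix (hu j)) (hfu j)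
    · simp [Finset.card_insert_of_notMem hp, Finset.card_image_of_injective _ hinj]
  · right
    push Not at hall
    exact hall

theorem exists_subtree_avoiding {α : Type*} [DecidableEq α] (f : CVert h k → α)
    (hsmall : ∀ (v : CVert h k) (S : Finset (CVert h k)),
      (∀ u ∈ S, (Cgraph h k).MonoReachable f v u) → S.card ≤ k) :
    ∀ i < h, ∃ (p : CVert h k) (T : Finset α),
      p.1.length = i ∧ T.card = i ∧ ∀ u : CVert h k, p.1 <+: u.1 → f u ∉ T := by
  intro i
  induction i with
  | zero => exact fun hh => ⟨⟨[], hh⟩, ∅, rfl, rfl, fun _ _ => Finset.notMem_empty _⟩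
  | succ i ih =>
    intro hi
    obtain ⟨p, T, hlen, hcard, hT⟩ := ih (by omega)
    obtain ⟨S, hS, hlarge⟩ | ⟨j, hj⟩ := large_monoComponent_or_exists_child_avoiding f p
    · exact absurd (hsmall p S hS) (by omega)
    refine ⟨⟨p.1 ++ [j], by simp [hlen, hi]⟩, insert (f p) T, by simp [hlen], ?_, ?_⟩
    · rw [Finset.card_insert_of_notMem (hT p List.prefix_rfl), hcard]
    · intro u hu
      rw [Finset.mem_insert, not_or]
      exact ⟨hj u hu, hT u ((List.prefix_append _ _).trans hu)⟩

theorem exists_large_monoComponent {α : Type*} [Fintype α] (f : CVert h k → α)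
    (hα : Fintype.card α < h) :
    ∃ (v : CVert h k) (S : Finset (CVert h k)),
      (∀ u ∈ S, (Cgraph h k).MonoReachable f v u) ∧ k < S.card := by
  classical
  by_contra! hsmall
  obtain ⟨p, T, -, hcard, hT⟩ := exists_subtree_avoiding f hsmall _ hα
  exact hT p List.prefix_rfl (Finset.eq_univ_of_card T hcard ▸ Finset.mem_univ _)

end CVert

theorem stmt7_general (h k : ℕ) (hh : 1 ≤ h)
    (f : CVert h k → Fin (h - 1)) :
    ∃ (v : CVert h k) (S : Finset (CVert h k)),
      (∀ u ∈ S, ∃ p : (Cgraph h k).Walk v u, ∀ x ∈ p.support, f x = f v) ∧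
      k < S.card :=
  CVert.exists_large_monoComponent f (by simp; omega)

/-- In any `(h-1)`-colouring of `C⟨h,k⟩`, some monochromatic component has
more than `k` vertices: there are more than `k` vertices all joined to a
common vertex `v` by walks whose vertices all have the colour of `v`. -/
theorem stmt7 (h k : ℕ) (hh : 1 ≤ h) (hk : 1 ≤ k)
    (f : CVert h k → Fin (h - 1)) :
    ∃ (v : CVert h k) (S : Finset (CVert h k)),
      (∀ u ∈ S, ∃ p : (Cgraph h k).Walk v u, ∀ x ∈ p.support, f x = f v) ∧
      k < S.card :=
  stmt7_general h k hh f
end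

section
/- For all integers h ≥ 2 and k ≥ 2, the weak closure W⟨h,k⟩ of the complete k-ary tree of depth h contains C⟨h,k−1⟩ as a minor. -/
/-- `W⟨h,k⟩`, the weak closure of the complete `k`-ary tree of depth `h`:
each leaf is adjacent to each of its (strict) ancestors, and these are all
the edges. -/
def Wgraph (h k : ℕ) : SimpleGraph (CVert h k) where
  Adj a b := a ≠ b ∧
    ((a.1.length = h - 1 ∧ b.1 <+: a.1) ∨ (b.1.length = h - 1 ∧ a.1 <+: b.1))
  symm := ⟨fun _ _ ⟨hne, hp⟩ => ⟨hne.symm, hp.symm⟩⟩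
  loopless := ⟨fun _ ⟨hne, _⟩ => hne rfl⟩

/-- `H` is a minor of `G`: there are pairwise disjoint nonempty connected
branch sets in `G`, one for each vertex of `H`, with an edge of `G` between
the branch sets of any two adjacent vertices of `H`. -/
def IsMinorOf {α β : Type*} (H : SimpleGraph α) (G : SimpleGraph β) : Prop :=
  ∃ B : α → Set β,
    (∀ a, (B a).Nonempty) ∧
    (∀ a, (G.induce (B a)).Connected) ∧
    (∀ a b, a ≠ b → Disjoint (B a) (B b)) ∧
    (∀ a b, H.Adj a b → ∃ x ∈ B a, ∃ y ∈ B b, G.Adj x y)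

/-!
Embed the complete `(k-1)`-ary tree in the complete `k`-ary tree by using only the first `k - 1`
children of each vertex, and let the branch set of a vertex `a` be `a` itself together with the
leaf reached from `a` by always descending to the unused last child. That leaf is adjacent in
`W⟨h,k⟩` to every ancestor of `a`, which gives both the connectivity of the branch sets and an
edge between the branch sets of an ancestor–descendant pair. Branch sets are disjoint because
stripping the trailing unused letters recovers `a`.
-/

open Function List

theorem List.eq_of_append_replicate_eq_append_replicate {α : Type*} [DecidableEq α] {c : α}
    {l₁ l₂ : List α} {m n : ℕ} (h₁ : c ∉ l₁) (h₂ : c ∉ l₂)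
    (heq : l₁ ++ replicate m c = l₂ ++ replicate n c) : l₁ = l₂ := by
  have takeWhile_ne : ∀ {l : List α} {r : ℕ}, c ∉ l →
      (l ++ replicate r c).takeWhile (· ≠ c) = l := by
    intro l r hl
    rw [takeWhile_append_of_pos (fun a ha => by simpa using ne_of_mem_of_not_mem ha hl),
      takeWhile_replicate]
    simp
  rw [← takeWhile_ne h₁ (r := m), heq, takeWhile_ne h₂]

theorem Wgraph_adj_of_prefix {h k : ℕ} {x y : CVert h k} (hne : x ≠ y)
    (hleaf : y.1.length = h - 1) (hpre : x.1 <+: y.1) : (Wgraph h k).Adj x y :=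
  ⟨hne, .inr ⟨hleaf, hpre⟩⟩

namespace CVert

variable {h m k : ℕ} (f : Fin m → Fin k) (c : Fin k)

def map (a : CVert h m) : CVert h k :=
  ⟨a.1.map f, by simpa using a.2⟩

def padToLeaf (a : CVert h m) : CVert h k :=
  ⟨a.1.map f ++ replicate (h - 1 - a.1.length) c, by
    have := a.2
    simp only [length_append, length_map, length_replicate]
    omega⟩

theorem length_padToLeaf (a : CVert h m) : (padToLeaf f c a).1.length = h - 1 := by
  have := a.2
  simp only [padToLeaf, length_append, length_map, length_replicate]
  omega

theorem map_prefix_padToLeaf {a b : CVert h m} (hab : a.1 <+: b.1) :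
    (map f a).1 <+: (padToLeaf f c b).1 :=
  (hab.map f).trans (prefix_append _ _)

def branchSet (a : CVert h m) : Set (CVert h k) :=
  {map f a, padToLeaf f c a}

theorem map_mem_branchSet (a : CVert h m) : map f a ∈ branchSet f c a := .inl rfl

theorem padToLeaf_mem_branchSet (a : CVert h m) : padToLeaf f c a ∈ branchSet f c a := .inr rfl

theorem exists_eq_append_replicate_of_mem_branchSet {a : CVert h m} {x : CVert h k}
    (hx : x ∈ branchSet f c a) : ∃ n, x.1 = a.1.map f ++ replicate n c := by
  rcases hx with rfl | rfl
  · exact ⟨0, by simp [map]⟩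
  · exact ⟨_, rfl⟩

theorem eq_of_mem_branchSet (hf : Injective f) (hc : ∀ i, f i ≠ c) {a b : CVert h m}
    {x : CVert h k} (ha : x ∈ branchSet f c a) (hb : x ∈ branchSet f c b) : a = b := by
  have not_mem : ∀ l : List (Fin m), c ∉ l.map f := by simpa using fun _ i _ => hc i
  obtain ⟨i, hi⟩ := exists_eq_append_replicate_of_mem_branchSet f c ha
  obtain ⟨j, hj⟩ := exists_eq_append_replicate_of_mem_branchSet f c hb
  exact Subtype.ext <| map_injective_iff.2 hf <|
    eq_of_append_replicate_eq_append_replicate (not_mem _) (not_mem _) (hi.symm.trans hj)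

theorem connected_induce_branchSet (a : CVert h m) :
    ((Wgraph h k).induce (branchSet f c a)).Connected := by
  by_cases hne : map f a = padToLeaf f c a
  · rw [branchSet, hne, Set.pair_eq_singleton, SimpleGraph.induce_singleton_eq_top]
    exact SimpleGraph.connected_top
  · exact SimpleGraph.induce_pair_connected_of_adj <|
      Wgraph_adj_of_prefix hne (length_padToLeaf f c a) (map_prefix_padToLeaf f c prefix_rfl)

end CVert

open CVert in
theorem isMinorOf_Cgraph_Wgraph {h m k : ℕ} (f : Fin m → Fin k) (c : Fin k) (hf : Injective f)
    (hc : ∀ i, f i ≠ c) : IsMinorOf (Cgraph h m) (Wgraph h k) := by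
  have map_ne_padToLeaf {a b : CVert h m} (hab : a ≠ b) : map f a ≠ padToLeaf f c b := fun heq =>
    hab <| eq_of_mem_branchSet f c hf hc (map_mem_branchSet f c a)
      (heq ▸ padToLeaf_mem_branchSet f c b)
  refine ⟨branchSet f c, fun a => ⟨_, map_mem_branchSet f c a⟩,
    connected_induce_branchSet f c,
    fun a b hab => Set.disjoint_left.2 fun x ha hb => hab (eq_of_mem_branchSet f c hf hc ha hb),
    fun a b ⟨hab, hpre⟩ => ?_⟩
  rcases hpre with hpre | hpre
  · exact ⟨_, map_mem_branchSet f c a, _, padToLeaf_mem_branchSet f c b,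
      Wgraph_adj_of_prefix (map_ne_padToLeaf hab) (length_padToLeaf f c b)
        (map_prefix_padToLeaf f c hpre)⟩
  · exact ⟨_, padToLeaf_mem_branchSet f c a, _, map_mem_branchSet f c b,
      (Wgraph_adj_of_prefix (map_ne_padToLeaf (Ne.symm hab)) (length_padToLeaf f c a)
        (map_prefix_padToLeaf f c hpre)).symm⟩

theorem stmt8_general (h k : ℕ) (hk : 2 ≤ k) :
    IsMinorOf (Cgraph h (k - 1)) (Wgraph h k) := by
  obtain ⟨n, rfl⟩ : ∃ n, k = n + 1 := ⟨k - 1, by omega⟩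
  exact isMinorOf_Cgraph_Wgraph Fin.castSucc (Fin.last n) (Fin.castSucc_injective n)
    Fin.castSucc_ne_last

theorem stmt8 (h k : ℕ) (hh : 2 ≤ h) (hk : 2 ≤ k) :
    IsMinorOf (Cgraph h (k - 1)) (Wgraph h k) :=
  stmt8_general h k hk
end

section
/- For all integers h ≥ 1, k ≥ 1, and every real d ≥ 0 with d ≤ k: if the graph C⟨h,k⟩ is fractionally t-colourable with defect d, then t ≥ h − (h−1)d/k. -/
open scoped Classical in
/-- `G` is fractionally `t`-colourable with defect `d`: there are sets
`Y 1, …, Y s ⊆ V(G)` and weights `α i ∈ [0,1]` such that every component of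
each `G[Y i]` has maximum degree at most `d` (i.e. every vertex of `Y i` has
at most `d` neighbours in `Y i`), `Σ α i ≤ t`, and every vertex is covered
with total weight at least 1. -/
def FracDefect {V : Type*} (G : SimpleGraph V) (t : ℝ) (d : ℝ) : Prop :=
  ∃ (s : ℕ) (Y : Fin s → Set V) (α : Fin s → ℝ),
    (∀ i, 0 ≤ α i ∧ α i ≤ 1) ∧
    (∀ i, ∀ v ∈ Y i, ∀ S : Finset V,
      (∀ u ∈ S, u ∈ Y i ∧ G.Adj v u) → (S.card : ℝ) ≤ d) ∧
    (∑ i, α i) ≤ t ∧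
    (∀ v : V, 1 ≤ ∑ i, if v ∈ Y i then α i else 0)

namespace InformationTheory

theorem uniquelyDecodable_of_isAntichain_prefix {α : Type*} {S : Set (List α)}
    (hS : IsAntichain (· <+: ·) S) (hnil : [] ∉ S) : UniquelyDecodable S := by
  have eq_nil_of_flatten_eq_nil : ∀ {L : List (List α)}, (∀ w ∈ L, w ∈ S) → L.flatten = [] → L = [] := by
    rintro (_ | ⟨a, L⟩) hL hflat
    · rfl
    · exact absurd (hL a (by simp)) (by simp_all)
  intro L₁ L₂ hL₁ hL₂ hflat
  induction L₁ generalizing L₂ with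
  | nil => exact (eq_nil_of_flatten_eq_nil hL₂ hflat.symm).symm
  | cons a L₁ ih =>
    cases L₂ with
    | nil => exact eq_nil_of_flatten_eq_nil hL₁ hflat
    | cons b L₂ =>
      simp only [List.flatten_cons, List.forall_mem_cons] at hflat hL₁ hL₂
      have hab : a = b := by
        rcases List.prefix_or_prefix_of_prefix (List.prefix_append a L₁.flatten)
          (hflat ▸ List.prefix_append b L₂.flatten) with h | h
        · exact hS.eq hL₁.1 hL₂.1 h
        · exact (hS.eq hL₂.1 hL₁.1 h).symm
      subst hab
      rw [ih L₂ hL₁.2 hL₂.2 (List.append_cancel_left hflat)]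

theorem kraft_inequality {α : Type*} [Fintype α] [Nonempty α] {S : Finset (List α)}
    (hS : IsAntichain (· <+: ·) (S : Set (List α))) :
    ∑ w ∈ S, (1 / Fintype.card α : ℝ) ^ w.length ≤ 1 := by
  by_cases hnil : [] ∈ S
  · have : S = {[]} := Finset.eq_singleton_iff_unique_mem.mpr
      ⟨hnil, fun w hw => (hS.eq hnil hw w.nil_prefix).symm⟩
    simp [this]
  · exact kraft_mcmillan_inequality (uniquelyDecodable_of_isAntichain_prefix hS hnil)

end InformationTheory

open Finset

open scoped Classical in
theorem sum_le_sum_of_fractionalCover {V ι : Type*} [Fintype V] [Fintype ι] {w : V → ℝ}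
    {Y : ι → Set V} {α : ι → ℝ} (hw : ∀ v, 0 ≤ w v) (hα : ∀ i, 0 ≤ α i)
    (hY : ∀ i, ∑ v with v ∈ Y i, w v ≤ 1) (hcov : ∀ v, 1 ≤ ∑ i, if v ∈ Y i then α i else 0) :
    ∑ v, w v ≤ ∑ i, α i :=
  calc ∑ v, w v
      ≤ ∑ v, w v * ∑ i, if v ∈ Y i then α i else 0 :=
        sum_le_sum fun v _ => le_mul_of_one_le_right (hw v) (hcov v)
    _ = ∑ i, α i * ∑ v with v ∈ Y i, w v := by
        simp only [mul_sum, sum_filter]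
        rw [sum_comm]
        refine sum_congr rfl fun i _ => sum_congr rfl fun v _ => ?_
        split_ifs <;> ring
    _ ≤ ∑ i, α i := sum_le_sum fun i _ => mul_le_of_le_one_right (hα i) (hY i)

namespace CVert

variable {h k : ℕ}

instance : PartialOrder (CVert h k) where
  le a b := a.1 <+: b.1
  le_refl a := List.prefix_refl a.1
  le_trans _ _ _ := List.IsPrefix.trans
  le_antisymm _ _ hab hba := Subtype.ext (hab.eq_of_length (hab.length_le.antisymm hba.length_le))

theorem length_lt_length_of_lt {a b : CVert h k} (hab : a < b) : a.1.length < b.1.length :=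
  hab.le.length_le.lt_of_ne fun heq => hab.ne (Subtype.ext (hab.le.eq_of_length heq))

def toList (v : CVert h k) : List (Fin k) := v.1

theorem toList_injective : Function.Injective (toList : CVert h k → List (Fin k)) :=
  fun _ _ => Subtype.ext

variable (h k) in
def equivSigmaVector : CVert h k ≃ Σ p : Fin h, List.Vector (Fin k) p where
  toFun v := ⟨⟨v.1.length, v.2⟩, ⟨v.1, rfl⟩⟩
  invFun σ := ⟨σ.2.1, σ.2.2.symm ▸ σ.1.2⟩
  left_inv _ := rfl
  right_inv := by
    rintro ⟨⟨p, hp⟩, l, hl⟩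
    simp only at hl
    subst hl
    rfl

instance : Fintype (CVert h k) := Fintype.ofEquiv _ (equivSigmaVector h k).symm

theorem sum_apply_length (f : ℕ → ℝ) :
    ∑ v : CVert h k, f v.1.length = ∑ p ∈ range h, (k : ℝ) ^ p * f p := by
  rw [← (equivSigmaVector h k).symm.sum_comp, ← univ_sigma_univ, sum_sigma,
    ← Fin.sum_univ_eq_sum_range]
  refine sum_congr rfl fun p _ => ?_
  trans ∑ l : List.Vector (Fin k) p, f p
  · exact sum_congr rfl fun l _ => congrArg f l.2
  · simp

variable (h k) in
noncomputable def weight (d : ℝ) (v : CVert h k) : ℝ :=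
  (if v.1.length + 1 = h then 1 else 1 - d / k) * (k : ℝ)⁻¹ ^ v.1.length

variable {d : ℝ}

theorem weight_nonneg (hdk : d ≤ k) (v : CVert h k) : 0 ≤ weight h k d v := by
  have : d / k ≤ 1 := div_le_one_of_le₀ hdk k.cast_nonneg
  unfold weight
  split_ifs
  · positivity
  · exact mul_nonneg (by linarith) (by positivity)

theorem weight_le (hd0 : 0 ≤ d) (v : CVert h k) : weight h k d v ≤ (k : ℝ)⁻¹ ^ v.1.length := by
  unfold weight
  refine mul_le_of_le_one_left (by positivity) ?_
  split_ifs <;> linarith [div_nonneg hd0 k.cast_nonneg]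

theorem sum_weight (hh : 1 ≤ h) (hk : k ≠ 0) :
    ∑ v : CVert h k, weight h k d v = h - (h - 1) * d / k := by
  obtain ⟨N, rfl⟩ : ∃ N, h = N + 1 := ⟨h - 1, by omega⟩
  have hk' : (k : ℝ) ≠ 0 := Nat.cast_ne_zero.mpr hk
  calc ∑ v : CVert (N + 1) k, weight (N + 1) k d v
      = ∑ p ∈ range (N + 1), (k : ℝ) ^ p * ((if p + 1 = N + 1 then 1 else 1 - d / k) *
          (k : ℝ)⁻¹ ^ p) :=
        sum_apply_length fun p => (if p + 1 = N + 1 then 1 else 1 - d / k) * (k : ℝ)⁻¹ ^ p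
    _ = ∑ p ∈ range (N + 1), if p + 1 = N + 1 then 1 else 1 - d / k := by
        refine sum_congr rfl fun p _ => ?_
        rw [mul_left_comm, ← mul_pow, mul_inv_cancel₀ hk', one_pow, mul_one]
    _ = _ := by
        rw [sum_range_succ, if_pos rfl,
          sum_congr rfl fun p hp => if_neg (by simp only [mem_range] at hp; omega)]
        simp only [sum_const, card_range, nsmul_eq_mul]
        push_cast
        ring

open scoped Classical in
theorem sum_weight_Ici_le (hd0 : 0 ≤ d) {Y : Set (CVert h k)}
    (hY : ∀ v ∈ Y, ∀ S : Finset (CVert h k),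
      (∀ u ∈ S, u ∈ Y ∧ (Cgraph h k).Adj v u) → (S.card : ℝ) ≤ d)
    {w : CVert h k} (hw : w ∈ Y) :
    ∑ v with v ∈ Y ∧ w ≤ v, weight h k d v ≤ (k : ℝ)⁻¹ ^ w.1.length := by
  set D : Finset (CVert h k) := {v | v ∈ Y ∧ w ≤ v}
  have hwD : w ∈ D := by simp [D, hw]
  have hnbr : ∀ u ∈ D.erase w, u ∈ Y ∧ (Cgraph h k).Adj w u := fun u hu => by
    obtain ⟨hne, huD⟩ := mem_erase.1 hu
    obtain ⟨huY, hwu⟩ := (mem_filter.1 huD).2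
    exact ⟨huY, Ne.symm hne, Or.inl hwu⟩
  have hdeep : ∀ u ∈ D.erase w, w.1.length + 1 ≤ u.1.length := fun u hu =>
    length_lt_length_of_lt (lt_of_le_of_ne (mem_filter.1 (mem_erase.1 hu).2).2.2
      (mem_erase.1 hu).1.symm)
  have hrest : ∑ u ∈ D.erase w, weight h k d u ≤ #(D.erase w) * (k : ℝ)⁻¹ ^ (w.1.length + 1) := by
    rw [← nsmul_eq_mul]
    exact sum_le_card_nsmul _ _ _ fun u hu => (weight_le hd0 u).trans
      (pow_le_pow_of_le_one (by positivity) (Nat.cast_inv_le_one k) (hdeep u hu))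
  rw [← add_sum_erase D _ hwD]
  by_cases hleaf : w.1.length + 1 = h
  · have hempty : D.erase w = ∅ := eq_empty_of_forall_notMem fun u hu =>
      by have := hdeep u hu; have := u.2; omega
    simp [hempty, weight, hleaf]
  · have hcard : (#(D.erase w) : ℝ) ≤ d := hY w hw _ hnbr
    calc weight h k d w + ∑ u ∈ D.erase w, weight h k d u
        ≤ (1 - d / k) * (k : ℝ)⁻¹ ^ w.1.length + d * (k : ℝ)⁻¹ ^ (w.1.length + 1) := by
          rw [weight, if_neg hleaf]
          gcongr
          exact hrest.trans (by gcongr)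
      _ = (k : ℝ)⁻¹ ^ w.1.length := by
          rw [pow_succ]
          ring

open scoped Classical in
theorem sum_weight_le_one (hk : 1 ≤ k) (hd0 : 0 ≤ d) (hdk : d ≤ k) {Y : Set (CVert h k)}
    (hY : ∀ v ∈ Y, ∀ S : Finset (CVert h k),
      (∀ u ∈ S, u ∈ Y ∧ (Cgraph h k).Adj v u) → (S.card : ℝ) ≤ d) :
    ∑ v with v ∈ Y, weight h k d v ≤ 1 := by
  have : NeZero k := ⟨by omega⟩
  set M : Finset (CVert h k) := {w | Minimal (· ∈ Y) w}
  have hM : ∀ w ∈ M, Minimal (· ∈ Y) w := fun w hw => (mem_filter.1 hw).2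
  have hcover : ∀ v ∈ Y, ∃ w ∈ M, w ≤ v := fun v hv => by
    obtain ⟨w, hwv, hw⟩ := exists_minimal_le_of_wellFoundedLT (· ∈ Y) v hv
    exact ⟨w, mem_filter.2 ⟨mem_univ w, hw⟩, hwv⟩
  have hanti : IsAntichain (· <+: ·) ((M.image toList : Finset _) : Set (List (Fin k))) := by
    simp only [M, coe_image, coe_filter, mem_univ, true_and]
    exact (setOfPred_minimal_antichain (· ∈ Y)).image _ fun _ _ h => h
  calc ∑ v with v ∈ Y, weight h k d v
      ≤ ∑ v with v ∈ Y, ∑ w ∈ M with w ≤ v, weight h k d v := by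
        refine sum_le_sum fun v hv => ?_
        obtain ⟨w, hwM, hwv⟩ := hcover v (mem_filter.1 hv).2
        rw [sum_const, nsmul_eq_mul]
        refine le_mul_of_one_le_left (weight_nonneg hdk v) ?_
        exact_mod_cast card_pos.2 ⟨w, mem_filter.2 ⟨hwM, hwv⟩⟩
    _ = ∑ w ∈ M, ∑ v with v ∈ Y ∧ w ≤ v, weight h k d v :=
        sum_comm' fun v w => by simp only [mem_filter, mem_univ, true_and]; tauto
    _ ≤ ∑ w ∈ M, (k : ℝ)⁻¹ ^ w.1.length :=
        sum_le_sum fun w hw => sum_weight_Ici_le hd0 hY (hM w hw).prop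
    _ = ∑ l ∈ M.image toList, (1 / Fintype.card (Fin k) : ℝ) ^ l.length := by
        rw [sum_image toList_injective.injOn, Fintype.card_fin, one_div]
        rfl
    _ ≤ 1 := InformationTheory.kraft_inequality hanti

end CVert

theorem stmt10 (h k : ℕ) (hh : 1 ≤ h) (hk : 1 ≤ k) (d t : ℝ)
    (hd0 : 0 ≤ d) (hdk : d ≤ (k : ℝ))
    (hcol : FracDefect (Cgraph h k) t d) :
    (h : ℝ) - ((h : ℝ) - 1) * d / (k : ℝ) ≤ t := by
  obtain ⟨s, Y, α, hα, hdef, hsum, hcov⟩ := hcol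
  calc (h : ℝ) - ((h : ℝ) - 1) * d / (k : ℝ)
      = ∑ v, CVert.weight h k d v := (CVert.sum_weight hh (by omega)).symm
    _ ≤ ∑ i, α i := sum_le_sum_of_fractionalCover (CVert.weight_nonneg hdk) (fun i => (hα i).1)
        (fun i => CVert.sum_weight_le_one hk hd0 hdk (hdef i)) hcov
    _ ≤ t := hsum
end

section
/- For all h ≥ 1 and k ≥ 1, the complete bipartite graph K_{h,k} is a subgraph of C⟨h+1,k⟩. In particular, K_{4,2g+3} ⊆ C⟨4,2g+3⟩ for every g ≥ 0. -/
namespace Cgraph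

variable {n k : ℕ}

theorem adj_of_isPrefix_of_length_lt {a b : CVert n k} (hab : a.1 <+: b.1)
    (hlen : a.1.length < b.1.length) : (Cgraph n k).Adj a b :=
  ⟨by rintro rfl; exact hlen.false, Or.inl hab⟩

variable {h : ℕ}

/-- The `h` ancestors `p.take i` of a vertex `p` at depth `h - 1` (`p` included) and its `k`
children: each ancestor is a prefix of each child, so they span a copy of `K_{h,k}`. -/
def ancestorsAndChildren (p : List (Fin k)) (hp : p.length + 1 = h) :
    Fin h ⊕ Fin k → CVert (h + 1) k
  | .inl i => ⟨p.take i, by simp only [List.length_take]; omega⟩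
  | .inr j => ⟨p ++ [j], by simp only [List.length_append, List.length_singleton]; omega⟩

theorem ancestorsAndChildren_injective (p : List (Fin k)) (hp : p.length + 1 = h) :
    Function.Injective (ancestorsAndChildren p hp) := by
  rintro (i | j) (i' | j') heq <;>
    have hlen := congrArg (fun v : CVert (h + 1) k => v.1.length) heq <;>
    simp only [ancestorsAndChildren, List.length_take, List.length_append,
      List.length_singleton] at hlen
  · exact congrArg Sum.inl (Fin.ext (by omega))
  · omega
  · omega
  · have hval := congrArg Subtype.val heq
    simp only [ancestorsAndChildren, List.append_cancel_left_eq, List.singleton_inj] at hval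
    exact congrArg Sum.inr hval

theorem ancestorsAndChildren_adj (p : List (Fin k)) (hp : p.length + 1 = h) (i : Fin h)
    (j : Fin k) :
    (Cgraph (h + 1) k).Adj (ancestorsAndChildren p hp (.inl i))
      (ancestorsAndChildren p hp (.inr j)) := by
  apply adj_of_isPrefix_of_length_lt
  · exact (List.take_prefix i p).trans (List.prefix_append p [j])
  · simp only [ancestorsAndChildren, List.length_take, List.length_append,
      List.length_singleton]
    omega

end Cgraph

open Cgraph in
/-- `K_{h,k}` is a subgraph of `C⟨h+1,k⟩`: there is an injective graph
homomorphism from the complete bipartite graph with parts of sizes `h` and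
`k` into `C⟨h+1,k⟩`. In particular `K_{4,2g+3} ⊆ C⟨4,2g+3⟩` for all `g ≥ 0`. -/
theorem stmt16 (h k : ℕ) (hh : 1 ≤ h) (hk : 1 ≤ k) :
    ∃ φ : (Fin h ⊕ Fin k) → CVert (h + 1) k, Function.Injective φ ∧
      ∀ a b, (completeBipartiteGraph (Fin h) (Fin k)).Adj a b →
        (Cgraph (h + 1) k).Adj (φ a) (φ b) := by
  have hp : (List.replicate (h - 1) (⟨0, hk⟩ : Fin k)).length + 1 = h := by
    rw [List.length_replicate]; omega
  refine ⟨ancestorsAndChildren _ hp, ancestorsAndChildren_injective _ hp, ?_⟩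
  rintro (i | i) (j | j) hadj
  · simp at hadj
  · exact ancestorsAndChildren_adj _ hp i j
  · exact (ancestorsAndChildren_adj _ hp j i).symm
  · simp at hadj
end
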